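/- arXiv:1607.04702 — 7 statements merged into one kernel-verified Lean document; each statement's English description precedes it below -/
import Mathlib

section
/- Let (E_n)_{n∈ℕ} be a strictly increasing sequence of negative real numbers with lim_{n→∞} E_n = 0, and let (M_n)_{n∈ℕ} be positive integers. Let I = {(n,i) : n ∈ ℕ, 1 ≤ i ≤ M_n}. Then there exists an at most countable partition (I_k)_k of I such that for every k: (a) I_k is infinite; (b) the first-coordinate map (n,i) ↦ n is injective on I_k; and (c) ∑_{(n,i) ∈ I_k} E_n² < ∞. -/
/-!
Pick a subsequence `φ` along which `E n ^ 2` is summable and label every cell `(n, i)` by a pair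
`(v, j)`. The columns `φ m` realise every label infinitely often in row `1`, and row `i` of a
column carries the label of that column shifted by `i - 1` in its first coordinate, so the
labels within one column are distinct. A column `n` outside the subsequence starts at label
`(n, 0)`, so only the finitely many with `n ≤ v` reach a label `(v, j)`. The fibres of the
labelling are therefore infinite, meet each column at most once, and involve only finitely
many columns outside the subsequence.
-/

open Set Filter Function Topology

theorem Summable.subtype_union_of_finite {α β : Type*} [AddCommMonoid α] [TopologicalSpace α]
    [ContinuousAdd α] {f : β → α} {s t : Set β} (hs : Summable (f ∘ (↑) : s → α))
    (ht : t.Finite) : Summable (f ∘ (↑) : ↑(s ∪ t) → α) := by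
  rw [summable_subtype_iff_indicator] at hs ⊢
  rw [← union_sdiff_self, indicator_union_of_disjoint disjoint_sdiff_right]
  exact hs.add (summable_of_hasFiniteSupport (ht.sdiff.subset support_indicator_subset))

theorem exists_strictMono_summable_comp_of_tendsto_zero {E : Type*} [NormedAddCommGroup E]
    [CompleteSpace E] {f : ℕ → E} (hf : Tendsto f atTop (𝓝 0)) :
    ∃ φ : ℕ → ℕ, StrictMono φ ∧ Summable (f ∘ φ) := by
  have hsmall (m : ℕ) : ∀ᶠ n in atTop, ‖f n‖ ≤ (1 / 2 : ℝ) ^ m :=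
    (tendsto_zero_iff_norm_tendsto_zero.mp hf).eventually_le_const (by positivity)
  obtain ⟨φ, hφ, hφsmall⟩ := extraction_forall_of_eventually hsmall
  exact ⟨φ, hφ, .of_norm_bounded summable_geometric_two hφsmall⟩

theorem exists_countable_partition_of_labelling {α κ : Type*} [Countable κ] (label : α → κ)
    (I : Set α) {p : Set α → Prop} (hp : ∀ k, p (I ∩ label ⁻¹' {k})) :
    ∃ P : Set (Set α), P.Countable ∧ P.Pairwise Disjoint ∧
      ⋃₀ P = I ∧ ∀ s ∈ P, p s := by
  refine ⟨range fun k => I ∩ label ⁻¹' {k}, countable_range _, ?_, ?_, ?_⟩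
  · refine Pairwise.range_pairwise fun k l hkl => ?_
    exact ((pairwise_disjoint_fiber label hkl).inter_left' I).inter_right' I
  · ext x
    simp
  · rintro s ⟨k, rfl⟩
    exact hp k

def indexSet (M : ℕ → ℕ) : Set (ℕ × ℕ) :=
  {x | 1 ≤ x.2 ∧ x.2 ≤ M x.1}

noncomputable def columnLabel (φ : ℕ → ℕ) : ℕ → ℕ × ℕ :=
  extend φ (fun m => Nat.unpair (Nat.unpair m).1) fun n => (n, 0)

noncomputable def cellLabel (φ : ℕ → ℕ) (x : ℕ × ℕ) : ℕ × ℕ :=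
  ((columnLabel φ x.1).1 + (x.2 - 1), (columnLabel φ x.1).2)

section Labels

variable {φ : ℕ → ℕ}

theorem infinite_setOf_columnLabel_eq (hφ : Injective φ) (k : ℕ × ℕ) :
    {n | columnLabel φ n = k}.Infinite := by
  refine (infinite_range_of_injective (f := fun s => φ (Nat.pair (Nat.pair k.1 k.2) s))
    fun s t hst => ?_).mono ?_
  · simpa using hφ hst
  · rintro _ ⟨s, rfl⟩
    simp [columnLabel, hφ.extend_apply]

theorem mapsTo_fst_preimage_cellLabel (k : ℕ × ℕ) :
    MapsTo Prod.fst (cellLabel φ ⁻¹' {k}) (range φ ∪ Iic k.1) := by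
  intro x (hx : cellLabel φ x = k)
  by_cases hrange : x.1 ∈ range φ
  · exact Or.inl hrange
  · rw [← hx, cellLabel, columnLabel, extend_apply' _ _ _ hrange]
    exact Or.inr (Nat.le_add_right _ _)

variable (M : ℕ → ℕ)

theorem infinite_cellLabel_fiber (hM : ∀ n, 1 ≤ M n) (hφ : Injective φ) (k : ℕ × ℕ) :
    (indexSet M ∩ cellLabel φ ⁻¹' {k}).Infinite := by
  refine ((infinite_setOf_columnLabel_eq hφ k).image (f := fun n => (n, 1))
    fun n _ m _ h => congrArg Prod.fst h).mono ?_
  rintro _ ⟨n, hn, rfl⟩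
  exact ⟨⟨le_rfl, hM n⟩, by simpa [cellLabel] using hn⟩

theorem injOn_fst_cellLabel_fiber (k : ℕ × ℕ) :
    InjOn Prod.fst (indexSet M ∩ cellLabel φ ⁻¹' {k}) := by
  rintro ⟨n, i⟩ ⟨⟨hi, -⟩, hik⟩ ⟨n', i'⟩ ⟨⟨hi', -⟩, hi'k⟩ (rfl : n = n')
  have hlabel : cellLabel φ (n, i) = cellLabel φ (n, i') := hik.trans hi'k.symm
  simp only [cellLabel, Prod.mk.injEq, and_true, true_and] at hlabel ⊢
  omega

theorem summable_cellLabel_fiber {α : Type*} [AddCommGroup α] [UniformSpace α]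
    [IsUniformAddGroup α] [CompleteSpace α] {f : ℕ → α} (hφ : Injective φ)
    (hf : Summable (f ∘ φ)) (k : ℕ × ℕ) :
    Summable fun x : ↑(indexSet M ∩ cellLabel φ ⁻¹' {k}) => f x.1.1 := by
  have hrange : Summable (f ∘ (↑) : range φ → α) :=
    (Equiv.ofInjective φ hφ).summable_iff.mp hf
  have hmaps : MapsTo Prod.fst (indexSet M ∩ cellLabel φ ⁻¹' {k}) (range φ ∪ Iic k.1) :=
    (mapsTo_fst_preimage_cellLabel k).mono_left inter_subset_right
  exact (hrange.subtype_union_of_finite (finite_Iic k.1)).comp_injective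
    (hmaps.restrict_inj.mpr (injOn_fst_cellLabel_fiber M k))

end Labels

theorem exists_countable_partition_index_set_general
    (E : ℕ → ℝ)
    (hlim : Filter.Tendsto E Filter.atTop (nhds 0))
    (M : ℕ → ℕ) (hM : ∀ n, 1 ≤ M n) :
    ∃ P : Set (Set (ℕ × ℕ)), P.Countable ∧
      P.Pairwise Disjoint ∧
      ⋃₀ P = {q : ℕ × ℕ | 1 ≤ q.2 ∧ q.2 ≤ M q.1} ∧
      ∀ s ∈ P, s.Infinite ∧ Set.InjOn Prod.fst s ∧
        Summable (fun x : s => (E (x : ℕ × ℕ).1) ^ 2) := by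
  obtain ⟨φ, hφ, hsum⟩ :=
    exists_strictMono_summable_comp_of_tendsto_zero (f := fun n => E n ^ 2)
      (by simpa using hlim.pow 2)
  exact exists_countable_partition_of_labelling (cellLabel φ) (indexSet M) fun k =>
    ⟨infinite_cellLabel_fiber M hM hφ.injective k, injOn_fst_cellLabel_fiber M k,
      summable_cellLabel_fiber M hφ.injective hsum k⟩

/-- Given a strictly increasing sequence `E` of negative reals tending to `0`
and positive multiplicities `M`, the index set `I = {(n,i) : 1 ≤ i ≤ M n}` admits an at most
countable partition into parts which are infinite, on which the first coordinate is injective,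
and on which `∑ E n ^ 2` is finite. -/
theorem exists_countable_partition_index_set
    (E : ℕ → ℝ) (hmono : StrictMono E) (hneg : ∀ n, E n < 0)
    (hlim : Filter.Tendsto E Filter.atTop (nhds 0))
    (M : ℕ → ℕ) (hM : ∀ n, 1 ≤ M n) :
    ∃ P : Set (Set (ℕ × ℕ)), P.Countable ∧
      P.Pairwise Disjoint ∧
      ⋃₀ P = {q : ℕ × ℕ | 1 ≤ q.2 ∧ q.2 ≤ M q.1} ∧
      ∀ s ∈ P, s.Infinite ∧ Set.InjOn Prod.fst s ∧
        Summable (fun x : s => (E (x : ℕ × ℕ).1) ^ 2) :=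
  exists_countable_partition_index_set_general E hlim M hM
end

section
/- Let ℋ be a complex Hilbert space with inner product ⟨·,·⟩ linear in the second variable, let H and T be linear maps defined on subspaces D(H) and D(T) of ℋ, and assume T is symmetric, i.e. ⟨Tφ,ψ⟩ = ⟨φ,Tψ⟩ for all φ,ψ ∈ D(T). Let D_w be a subspace of D(T) ∩ D(H) such that ⟨Hφ,Tψ⟩ − ⟨Tφ,Hψ⟩ = −i⟨φ,ψ⟩ for all φ,ψ ∈ D_w. If ψ ∈ D_w satisfies Hψ = Eψ for some real number E, then ψ = 0. -/
open scoped InnerProductSpace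

theorem inner_ofReal_smul_sub_inner_ofReal_smul_eq_zero {𝕜 F : Type*} [RCLike 𝕜]
    [SeminormedAddCommGroup F] [InnerProductSpace 𝕜 F] {x y : F}
    (hxy : ⟪x, y⟫_𝕜 = ⟪y, x⟫_𝕜) (r : ℝ) :
    ⟪(r : 𝕜) • x, y⟫_𝕜 - ⟪y, (r : 𝕜) • x⟫_𝕜 = 0 := by
  rw [inner_smul_real_left, inner_smul_real_right, hxy, sub_self]

/-- a weak time operator `T` of `H` excludes eigenvectors of `H` from any
weak-CCR domain. -/
theorem eigenvector_in_weak_ccr_domain_eq_zero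
    {ℋ : Type*} [NormedAddCommGroup ℋ] [InnerProductSpace ℂ ℋ]
    (H T : ℋ →ₗ.[ℂ] ℋ)
    (hTsymm : ∀ φ ψ : T.domain, ⟪T φ, (ψ : ℋ)⟫_ℂ = ⟪(φ : ℋ), T ψ⟫_ℂ)
    (Dw : Submodule ℂ ℋ) (hDwT : Dw ≤ T.domain) (hDwH : Dw ≤ H.domain)
    (hccr : ∀ (φ ψ : ℋ) (hφ : φ ∈ Dw) (hψ : ψ ∈ Dw),
      ⟪H ⟨φ, hDwH hφ⟩, T ⟨ψ, hDwT hψ⟩⟫_ℂ - ⟪T ⟨φ, hDwT hφ⟩, H ⟨ψ, hDwH hψ⟩⟫_ℂ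
        = (-Complex.I) * ⟪φ, ψ⟫_ℂ)
    (ψ : ℋ) (hψ : ψ ∈ Dw) (E : ℝ)
    (heig : H ⟨ψ, hDwH hψ⟩ = (E : ℂ) • ψ) :
    ψ = 0 := by
  have hcomm_zero : ⟪H ⟨ψ, hDwH hψ⟩, T ⟨ψ, hDwT hψ⟩⟫_ℂ
      - ⟪T ⟨ψ, hDwT hψ⟩, H ⟨ψ, hDwH hψ⟩⟫_ℂ = 0 := by
    rw [heig]
    exact inner_ofReal_smul_sub_inner_ofReal_smul_eq_zero (hTsymm ⟨ψ, hDwT hψ⟩ ⟨ψ, hDwT hψ⟩).symm E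
  have hnorm_zero : ⟪ψ, ψ⟫_ℂ = 0 := by
    rw [hccr ψ ψ hψ hψ, mul_eq_zero] at hcomm_zero
    exact hcomm_zero.resolve_left (neg_ne_zero.mpr Complex.I_ne_zero)
  exact inner_self_eq_zero.mp hnorm_zero
end

section
/- Let ℋ be a complex Hilbert space with inner product ⟨·,·⟩ linear in the second variable. Let H be a linear map with domain D(H) ⊆ ℋ, let 𝒟₁, 𝒟₂, 𝒟, ℰ be subspaces of ℋ with ℰ ⊆ 𝒟 ⊆ 𝒟₁ ∩ 𝒟₂, ℰ ⊆ D(H), H(ℰ) ⊆ 𝒟₁, and suppose H is symmetric on ℰ, i.e. ⟨Hφ,ψ⟩ = ⟨φ,Hψ⟩ for all φ,ψ ∈ ℰ. Let 𝔱 : 𝒟₁ × 𝒟₂ → ℂ be sesquilinear (antilinear in the first argument, linear in the second), symmetric on 𝒟 (conj(𝔱[φ,ψ]) = 𝔱[ψ,φ] for φ,ψ ∈ 𝒟), and satisfy the ultra-weak CCR: 𝔱[Hφ,ψ] − conj(𝔱[Hψ,φ]) = −i⟨φ,ψ⟩ for all φ,ψ ∈ ℰ. Then for all real numbers a, b and every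 ψ ∈ ℰ with ‖ψ‖ = 1, |𝔱[Hψ − bψ, ψ] − a⟨Hψ − bψ, ψ⟩| ≥ 1/2. -/
open scoped InnerProductSpace ComplexConjugate

/-! The ultra-weak CCR at `φ = ψ` says `Im 𝔱[Hψ, ψ] = -1/2`. By symmetry of `𝔱` and of `H`,
`𝔱[ψ, ψ]` and `⟨Hψ, ψ⟩` are real, so the shifts by `b` and `a` leave the imaginary part
unchanged, and a complex number's modulus dominates its imaginary part. -/

theorem Complex.im_eq_neg_half_of_sub_conj_eq_neg_I {z : ℂ} (h : z - conj z = -Complex.I) :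
    z.im = -1 / 2 := by
  have h_im := congrArg Complex.im h
  simp only [Complex.sub_im, Complex.conj_im, Complex.neg_im, Complex.I_im] at h_im
  linarith

theorem apply_mk_sub_smul_left_of_additive_antilinear {E W : Type*} [AddCommGroup E]
    [Module ℂ E] {V : Submodule ℂ E} (t : V → W → ℂ)
    (hadd : ∀ (φ φ' : V) (ψ : W), t (φ + φ') ψ = t φ ψ + t φ' ψ)
    (hsmul : ∀ (c : ℂ) (φ : V) (ψ : W), t (c • φ) ψ = conj c * t φ ψ)
    {x y : E} (hx : x ∈ V) (hy : y ∈ V) (c : ℂ) (ψ : W) :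
    t ⟨x - c • y, V.sub_mem hx (V.smul_mem c hy)⟩ ψ = t ⟨x, hx⟩ ψ - conj c * t ⟨y, hy⟩ ψ := by
  have h_split :
      (⟨x - c • y, V.sub_mem hx (V.smul_mem c hy)⟩ : V) = ⟨x, hx⟩ + (-c) • ⟨y, hy⟩ := by
    ext
    simp [sub_eq_add_neg]
  rw [h_split, hadd, hsmul, map_neg, neg_mul, sub_eq_add_neg]

theorem ultra_weak_time_operator_uncertainty_general
    {ℋ : Type*} [NormedAddCommGroup ℋ] [InnerProductSpace ℂ ℋ]
    (H : ℋ →ₗ.[ℂ] ℋ) (𝒟₁ 𝒟₂ 𝒟 ℰ : Submodule ℂ ℋ)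
    (h𝒟1 : 𝒟 ≤ 𝒟₁) (h𝒟2 : 𝒟 ≤ 𝒟₂) (hℰ𝒟 : ℰ ≤ 𝒟) (hℰH : ℰ ≤ H.domain)
    (t : 𝒟₁ → 𝒟₂ → ℂ)
    -- sesquilinearity: antilinear in the first argument, linear in the second
    (haddl : ∀ (φ φ' : 𝒟₁) (ψ : 𝒟₂), t (φ + φ') ψ = t φ ψ + t φ' ψ)
    (hsmull : ∀ (c : ℂ) (φ : 𝒟₁) (ψ : 𝒟₂), t (c • φ) ψ = conj c * t φ ψ)
    -- symmetry on 𝒟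
    (hsymm : ∀ (φ ψ : ℋ) (hφ : φ ∈ 𝒟) (hψ : ψ ∈ 𝒟),
      conj (t ⟨φ, h𝒟1 hφ⟩ ⟨ψ, h𝒟2 hψ⟩) = t ⟨ψ, h𝒟1 hψ⟩ ⟨φ, h𝒟2 hφ⟩)
    -- H is symmetric on ℰ
    (hHsymm : ∀ (φ ψ : ℋ) (hφ : φ ∈ ℰ) (hψ : ψ ∈ ℰ),
      ⟪H ⟨φ, hℰH hφ⟩, ψ⟫_ℂ = ⟪φ, H ⟨ψ, hℰH hψ⟩⟫_ℂ)
    (hHE : ∀ (ψ : ℋ) (hψ : ψ ∈ ℰ), H ⟨ψ, hℰH hψ⟩ ∈ 𝒟₁)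
    -- ultra-weak CCR
    (hccr : ∀ (φ ψ : ℋ) (hφ : φ ∈ ℰ) (hψ : ψ ∈ ℰ),
      t ⟨H ⟨φ, hℰH hφ⟩, hHE φ hφ⟩ ⟨ψ, h𝒟2 (hℰ𝒟 hψ)⟩
        - conj (t ⟨H ⟨ψ, hℰH hψ⟩, hHE ψ hψ⟩ ⟨φ, h𝒟2 (hℰ𝒟 hφ)⟩)
        = (-Complex.I) * ⟪φ, ψ⟫_ℂ)
    (a b : ℝ) (ψ : ℋ) (hψ : ψ ∈ ℰ) (hnorm : ‖ψ‖ = 1) :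
    1 / 2 ≤ ‖
      (t ⟨H ⟨ψ, hℰH hψ⟩ - (b : ℂ) • ψ,
            𝒟₁.sub_mem (hHE ψ hψ) (𝒟₁.smul_mem _ (h𝒟1 (hℰ𝒟 hψ)))⟩
          ⟨ψ, h𝒟2 (hℰ𝒟 hψ)⟩
        - (a : ℂ) * ⟪H ⟨ψ, hℰH hψ⟩ - (b : ℂ) • ψ, ψ⟫_ℂ)‖ := by
  have h_unit : ⟪ψ, ψ⟫_ℂ = 1 := by
    rw [inner_self_eq_norm_sq_to_K, hnorm]
    norm_num
  have h_t_real : (t ⟨ψ, h𝒟1 (hℰ𝒟 hψ)⟩ ⟨ψ, h𝒟2 (hℰ𝒟 hψ)⟩).im = 0 :=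
    Complex.conj_eq_iff_im.mp (hsymm ψ ψ (hℰ𝒟 hψ) (hℰ𝒟 hψ))
  have h_H_real : (⟪H ⟨ψ, hℰH hψ⟩, ψ⟫_ℂ).im = 0 :=
    Complex.conj_eq_iff_im.mp (by rw [inner_conj_symm, hHsymm ψ ψ hψ hψ])
  have h_ccr_im : (t ⟨H ⟨ψ, hℰH hψ⟩, hHE ψ hψ⟩ ⟨ψ, h𝒟2 (hℰ𝒟 hψ)⟩).im = -1 / 2 :=
    Complex.im_eq_neg_half_of_sub_conj_eq_neg_I (by rw [← mul_one (-Complex.I), ← h_unit]; exact hccr ψ ψ hψ hψ)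
  rw [apply_mk_sub_smul_left_of_additive_antilinear t haddl hsmull (hHE ψ hψ)
    (h𝒟1 (hℰ𝒟 hψ)), inner_sub_left, inner_smul_left, h_unit]
  refine le_trans (le_of_eq ?_) (Complex.abs_im_le_norm _)
  norm_num [h_t_real, h_H_real, h_ccr_im]

/-- uncertainty relation for an ultra-weak time operator `𝔱` of `H`:
`|(𝔱 - a)[(H - b)ψ, ψ]| ≥ 1/2` for unit vectors `ψ` in the ultra-weak CCR-domain `ℰ`. -/
theorem ultra_weak_time_operator_uncertainty
    {ℋ : Type*} [NormedAddCommGroup ℋ] [InnerProductSpace ℂ ℋ]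
    (H : ℋ →ₗ.[ℂ] ℋ) (𝒟₁ 𝒟₂ 𝒟 ℰ : Submodule ℂ ℋ)
    (h𝒟1 : 𝒟 ≤ 𝒟₁) (h𝒟2 : 𝒟 ≤ 𝒟₂) (hℰ𝒟 : ℰ ≤ 𝒟) (hℰH : ℰ ≤ H.domain)
    (t : 𝒟₁ → 𝒟₂ → ℂ)
    -- sesquilinearity: antilinear in the first argument, linear in the second
    (haddl : ∀ (φ φ' : 𝒟₁) (ψ : 𝒟₂), t (φ + φ') ψ = t φ ψ + t φ' ψ)
    (hsmull : ∀ (c : ℂ) (φ : 𝒟₁) (ψ : 𝒟₂), t (c • φ) ψ = conj c * t φ ψ)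
    (haddr : ∀ (φ : 𝒟₁) (ψ ψ' : 𝒟₂), t φ (ψ + ψ') = t φ ψ + t φ ψ')
    (hsmulr : ∀ (c : ℂ) (φ : 𝒟₁) (ψ : 𝒟₂), t φ (c • ψ) = c * t φ ψ)
    -- symmetry on 𝒟
    (hsymm : ∀ (φ ψ : ℋ) (hφ : φ ∈ 𝒟) (hψ : ψ ∈ 𝒟),
      conj (t ⟨φ, h𝒟1 hφ⟩ ⟨ψ, h𝒟2 hψ⟩) = t ⟨ψ, h𝒟1 hψ⟩ ⟨φ, h𝒟2 hφ⟩)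
    -- H is symmetric on ℰ
    (hHsymm : ∀ (φ ψ : ℋ) (hφ : φ ∈ ℰ) (hψ : ψ ∈ ℰ),
      ⟪H ⟨φ, hℰH hφ⟩, ψ⟫_ℂ = ⟪φ, H ⟨ψ, hℰH hψ⟩⟫_ℂ)
    (hHE : ∀ (ψ : ℋ) (hψ : ψ ∈ ℰ), H ⟨ψ, hℰH hψ⟩ ∈ 𝒟₁)
    -- ultra-weak CCR
    (hccr : ∀ (φ ψ : ℋ) (hφ : φ ∈ ℰ) (hψ : ψ ∈ ℰ),
      t ⟨H ⟨φ, hℰH hφ⟩, hHE φ hφ⟩ ⟨ψ, h𝒟2 (hℰ𝒟 hψ)⟩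
        - conj (t ⟨H ⟨ψ, hℰH hψ⟩, hHE ψ hψ⟩ ⟨φ, h𝒟2 (hℰ𝒟 hφ)⟩)
        = (-Complex.I) * ⟪φ, ψ⟫_ℂ)
    (a b : ℝ) (ψ : ℋ) (hψ : ψ ∈ ℰ) (hnorm : ‖ψ‖ = 1) :
    1 / 2 ≤ ‖
      (t ⟨H ⟨ψ, hℰH hψ⟩ - (b : ℂ) • ψ,
            𝒟₁.sub_mem (hHE ψ hψ) (𝒟₁.smul_mem _ (h𝒟1 (hℰ𝒟 hψ)))⟩
          ⟨ψ, h𝒟2 (hℰ𝒟 hψ)⟩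
        - (a : ℂ) * ⟪H ⟨ψ, hℰH hψ⟩ - (b : ℂ) • ψ, ψ⟫_ℂ)‖ :=
  ultra_weak_time_operator_uncertainty_general H 𝒟₁ 𝒟₂ 𝒟 ℰ h𝒟1 h𝒟2 hℰ𝒟 hℰH t haddl hsmull hsymm
    hHsymm hHE hccr a b ψ hψ hnorm
end

section
/- Let ℋ be a complex Hilbert space with Hilbert (orthonormal) basis (e_n)_{n∈ℕ} and let (E_n)_{n∈ℕ} be pairwise distinct real numbers such that for some N, E_n ≠ 0 for all n ≥ N and ∑_{n≥N} 1/E_n² < ∞. Let 𝓕 be the algebraic linear span of {e_n : n ∈ ℕ}. Then for every φ ∈ 𝓕 the family (c_n(φ))_{n∈ℕ}, where c_n(φ) := ∑_{m≠n} ⟨e_m,φ⟩/(E_n − E_m) (a finite sum), is square-summable, so that Tφ := i ∑_n c_n(φ) e_n converges in ℋ; moreover the resulting linear map T : 𝓕 → ℋ is symmetric: ⟨Tφ,ψ⟩ = ⟨φ,Tψ⟩ for all φ,ψ ∈ 𝓕. -/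
/-!
For `φ` in the span of the basis only finitely many `⟪e m, φ⟫` are nonzero, so `c(φ)` is a finite
combination of the sequences `n ↦ (E n - E m)⁻¹`; each is square-summable because
`|E n - E m| ≥ |E n| / 2` for all but finitely many `n`. Hence `⟪e n, T φ⟫ = ∑ m, K n m ⟪e m, φ⟫`
with the finite kernel `K n m = i / (E n - E m)`, which is Hermitian because `E` is real, and
Parseval's identity reduces the symmetry of `T` to that of a Hermitian matrix.
-/

open scoped InnerProductSpace

/-- The coefficient `c_n(φ) = ∑_{m ≠ n} ⟨e_m, φ⟩ / (E_n - E_m)` of the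
Galapon/Arai–Matsuzawa time operator. -/
noncomputable def timeOpCoeff {ℋ : Type*} [NormedAddCommGroup ℋ] [InnerProductSpace ℂ ℋ]
    (e : HilbertBasis ℕ ℂ ℋ) (E : ℕ → ℝ) (φ : ℋ) (n : ℕ) : ℂ :=
  ∑' m : ℕ, if m = n then 0 else ⟪e m, φ⟫_ℂ / ((E n : ℂ) - (E m : ℂ))

/-- The Galapon/Arai–Matsuzawa time operator `Tφ = i ∑_n c_n(φ) e_n`. -/
noncomputable def timeOp {ℋ : Type*} [NormedAddCommGroup ℋ] [InnerProductSpace ℂ ℋ]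
    (e : HilbertBasis ℕ ℂ ℋ) (E : ℕ → ℝ) (φ : ℋ) : ℋ :=
  Complex.I • ∑' n : ℕ, timeOpCoeff e E φ n • e n

open Filter

theorem summable_inv_sub_sq {ι : Type*} {f : ι → ℝ} (hf0 : ∀ᶠ i in cofinite, f i ≠ 0)
    (hf : Summable fun i => (f i ^ 2)⁻¹) (a : ℝ) : Summable fun i => ((f i - a) ^ 2)⁻¹ := by
  have hpos : ∀ᶠ i in cofinite, 0 < (f i ^ 2)⁻¹ := hf0.mono fun i hi => by positivity
  have hlarge : ∀ᶠ i in cofinite, (2 * a) ^ 2 < f i ^ 2 := by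
    have := (tendsto_nhdsWithin_iff.mpr ⟨hf.tendsto_cofinite_zero, hpos⟩).inv_tendsto_nhdsGT_zero
    simpa only [Pi.inv_apply, inv_inv] using this.eventually_gt_atTop ((2 * a) ^ 2)
  refine Summable.of_norm_bounded_eventually (hf.mul_left 4) ?_
  filter_upwards [hlarge] with i hi
  have hfa : f i ^ 2 / 4 ≤ (f i - a) ^ 2 := by
    nlinarith [sq_nonneg (f i - 2 * a), sq_nonneg (3 * f i - 2 * a)]
  rw [Real.norm_of_nonneg (by positivity)]
  calc ((f i - a) ^ 2)⁻¹ ≤ (f i ^ 2 / 4)⁻¹ := inv_anti₀ (by nlinarith) hfa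
    _ = 4 * (f i ^ 2)⁻¹ := by rw [inv_div, div_eq_mul_inv]

theorem memℓp_two_inv_sub {ι : Type*} {f : ι → ℝ} (hf0 : ∀ᶠ i in cofinite, f i ≠ 0)
    (hf : Summable fun i => (f i ^ 2)⁻¹) (a : ℝ) :
    Memℓp (fun i => ((f i : ℂ) - a)⁻¹) 2 := by
  refine memℓp_gen ?_
  convert summable_inv_sub_sq hf0 hf a using 2 with i
  rw [← Complex.ofReal_sub, norm_inv, Complex.norm_real, Real.norm_eq_abs, ENNReal.toReal_ofNat,
    Real.rpow_two, inv_pow, sq_abs]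

theorem Finset.star_sum_star_mul_sum_mul {ι R : Type*} [CommSemiring R] [StarRing R]
    (s : Finset ι) {H : ι → ι → R} (hH : ∀ n m, star (H n m) = H m n) (x y : ι → R) :
    star (∑ n ∈ s, star (y n) * ∑ m ∈ s, H n m * x m) =
      ∑ n ∈ s, star (x n) * ∑ m ∈ s, H n m * y m := by
  simp only [star_sum, Finset.mul_sum, star_mul, star_star, hH]
  rw [Finset.sum_comm]
  exact Finset.sum_congr rfl fun n _ => Finset.sum_congr rfl fun m _ => by ring

theorem Complex.star_I_mul_inv_ofReal_sub (a b : ℝ) :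
    star (I * ((a : ℂ) - b)⁻¹) = I * ((b : ℂ) - a)⁻¹ := by
  rw [star_mul', star_inv₀, star_sub, star_def, conj_I, conj_ofReal, conj_ofReal, ← neg_sub,
    inv_neg, neg_mul_neg]

section TimeOperator

variable {ℋ : Type*} [NormedAddCommGroup ℋ] [InnerProductSpace ℂ ℋ]

theorem HilbertBasis.exists_finset_inner_eq_zero_of_mem_span (e : HilbertBasis ℕ ℂ ℋ) {φ : ℋ}
    (hφ : φ ∈ Submodule.span ℂ (Set.range e)) : ∃ s : Finset ℕ, ∀ m ∉ s, ⟪e m, φ⟫_ℂ = 0 := by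
  obtain ⟨c, rfl⟩ := Finsupp.mem_span_range_iff_exists_finsupp.mp hφ
  refine ⟨c.support, fun m hm => ?_⟩
  rw [← Finsupp.linearCombination_apply, e.orthonormal.inner_right_finsupp]
  exact Finsupp.notMem_support_iff.mp hm

theorem HilbertBasis.inner_eq_sum_of_inner_eq_zero (e : HilbertBasis ℕ ℂ ℋ) {φ : ℋ}
    {s : Finset ℕ} (hs : ∀ m ∉ s, ⟪e m, φ⟫_ℂ = 0) (χ : ℋ) :
    ⟪φ, χ⟫_ℂ = ∑ n ∈ s, star ⟪e n, φ⟫_ℂ * ⟪e n, χ⟫_ℂ := by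
  rw [← e.tsum_inner_mul_inner, tsum_eq_sum fun n hn => by rw [← inner_conj_symm, hs n hn]; simp]
  exact Finset.sum_congr rfl fun n _ => by rw [← inner_conj_symm]; rfl

theorem HilbertBasis.inner_tsum_smul (e : HilbertBasis ℕ ℂ ℋ) {c : ℕ → ℂ} (hc : Memℓp c 2)
    (n : ℕ) : ⟪e n, ∑' k, c k • e k⟫_ℂ = c n := by
  rw [(e.hasSum_repr_symm ⟨c, hc⟩).tsum_eq, ← e.repr_apply_apply,
    LinearIsometryEquiv.apply_symm_apply]

/-- Since `x / 0 = 0`, the excluded diagonal term `m = n` vanishes anyway. -/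
theorem timeOpCoeff_eq_sum (e : HilbertBasis ℕ ℂ ℋ) (E : ℕ → ℝ) {φ : ℋ} {s : Finset ℕ}
    (hs : ∀ m ∉ s, ⟪e m, φ⟫_ℂ = 0) (n : ℕ) :
    timeOpCoeff e E φ n = ∑ m ∈ s, ((E n : ℂ) - E m)⁻¹ * ⟪e m, φ⟫_ℂ := by
  have hdiag : ∀ m, (if m = n then 0 else ⟪e m, φ⟫_ℂ / ((E n : ℂ) - E m)) =
      ((E n : ℂ) - E m)⁻¹ * ⟪e m, φ⟫_ℂ := by
    intro m
    split_ifs with h <;> simp [h, div_eq_inv_mul]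
  simp only [timeOpCoeff, hdiag]
  exact tsum_eq_sum fun m hm => by rw [hs m hm, mul_zero]

theorem memℓp_timeOpCoeff (e : HilbertBasis ℕ ℂ ℋ) {E : ℕ → ℝ}
    (hE0 : ∀ᶠ n in cofinite, E n ≠ 0) (hE : Summable fun n => (E n ^ 2)⁻¹) {φ : ℋ} {s : Finset ℕ}
    (hs : ∀ m ∉ s, ⟪e m, φ⟫_ℂ = 0) : Memℓp (timeOpCoeff e E φ) 2 := by
  simp only [funext (timeOpCoeff_eq_sum e E hs)]
  refine Memℓp.finsetSum s fun m _ => ?_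
  simpa only [mul_comm] using (memℓp_two_inv_sub hE0 hE (E m)).const_mul ⟪e m, φ⟫_ℂ

theorem inner_timeOp_eq_sum (e : HilbertBasis ℕ ℂ ℋ) {E : ℕ → ℝ}
    (hE0 : ∀ᶠ n in cofinite, E n ≠ 0) (hE : Summable fun n => (E n ^ 2)⁻¹) {φ : ℋ} {s : Finset ℕ}
    (hs : ∀ m ∉ s, ⟪e m, φ⟫_ℂ = 0) (n : ℕ) :
    ⟪e n, timeOp e E φ⟫_ℂ = ∑ m ∈ s, Complex.I * ((E n : ℂ) - E m)⁻¹ * ⟪e m, φ⟫_ℂ := by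
  rw [timeOp, inner_smul_right, e.inner_tsum_smul (memℓp_timeOpCoeff e hE0 hE hs),
    timeOpCoeff_eq_sum e E hs, Finset.mul_sum]
  simp only [mul_assoc]

end TimeOperator

theorem timeOp_well_defined_and_symmetric_general
    {ℋ : Type*} [NormedAddCommGroup ℋ] [InnerProductSpace ℂ ℋ]
    (e : HilbertBasis ℕ ℂ ℋ) (E : ℕ → ℝ)
    (N : ℕ) (hne : ∀ n, N ≤ n → E n ≠ 0)
    (hsum : Summable fun n : ℕ => 1 / (E (n + N)) ^ 2) :
    (∀ φ ∈ Submodule.span ℂ (Set.range e),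
      Summable fun n : ℕ => ‖timeOpCoeff e E φ n‖ ^ 2) ∧
    (∀ φ ∈ Submodule.span ℂ (Set.range e),
      Summable fun n : ℕ => timeOpCoeff e E φ n • (e n : ℋ)) ∧
    (∀ φ ∈ Submodule.span ℂ (Set.range e), ∀ ψ ∈ Submodule.span ℂ (Set.range e),
      ⟪timeOp e E φ, ψ⟫_ℂ = ⟪φ, timeOp e E ψ⟫_ℂ) := by
  have hE : Summable fun n => (E n ^ 2)⁻¹ :=
    (summable_nat_add_iff N).mp (by simpa only [one_div] using hsum)
  have hE0 : ∀ᶠ n in cofinite, E n ≠ 0 := Nat.cofinite_eq_atTop ▸ eventually_atTop.mpr ⟨N, hne⟩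
  have hmem : ∀ φ ∈ Submodule.span ℂ (Set.range e), Memℓp (timeOpCoeff e E φ) 2 := by
    intro φ hφ
    obtain ⟨s, hs⟩ := e.exists_finset_inner_eq_zero_of_mem_span hφ
    exact memℓp_timeOpCoeff e hE0 hE hs
  refine ⟨fun φ hφ => ?_, fun φ hφ => (e.hasSum_repr_symm ⟨_, hmem φ hφ⟩).summable, ?_⟩
  · simpa only [ENNReal.toReal_ofNat, Real.rpow_two] using (hmem φ hφ).summable (by norm_num)
  intro φ hφ ψ hψ
  obtain ⟨s, hs⟩ := e.exists_finset_inner_eq_zero_of_mem_span hφ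
  obtain ⟨t, ht⟩ := e.exists_finset_inner_eq_zero_of_mem_span hψ
  have hsu : ∀ m ∉ s ∪ t, ⟪e m, φ⟫_ℂ = 0 :=
    fun m hm => hs m fun h => hm (Finset.mem_union_left t h)
  have htu : ∀ m ∉ s ∪ t, ⟪e m, ψ⟫_ℂ = 0 :=
    fun m hm => ht m fun h => hm (Finset.mem_union_right s h)
  calc ⟪timeOp e E φ, ψ⟫_ℂ = star ⟪ψ, timeOp e E φ⟫_ℂ := (inner_conj_symm _ _).symm
    _ = star (∑ n ∈ s ∪ t, star ⟪e n, ψ⟫_ℂ *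
          ∑ m ∈ s ∪ t, Complex.I * ((E n : ℂ) - E m)⁻¹ * ⟪e m, φ⟫_ℂ) := by
      simp only [e.inner_eq_sum_of_inner_eq_zero htu, inner_timeOp_eq_sum e hE0 hE hsu]
    _ = ∑ n ∈ s ∪ t, star ⟪e n, φ⟫_ℂ *
          ∑ m ∈ s ∪ t, Complex.I * ((E n : ℂ) - E m)⁻¹ * ⟪e m, ψ⟫_ℂ :=
      Finset.star_sum_star_mul_sum_mul _
        (fun n m => Complex.star_I_mul_inv_ofReal_sub (E n) (E m)) _ _
    _ = ⟪φ, timeOp e E ψ⟫_ℂ := by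
      simp only [e.inner_eq_sum_of_inner_eq_zero hsu, inner_timeOp_eq_sum e hE0 hE htu]

/-- well-definedness and symmetry on `𝓕 = span{e_n}` of the time operator
`Tφ = i ∑_n (∑_{m≠n} ⟨e_m,φ⟩/(E_n - E_m)) e_n`, under the growth condition
`∑_{n ≥ N} 1/E_n² < ∞`. -/
theorem timeOp_well_defined_and_symmetric
    {ℋ : Type*} [NormedAddCommGroup ℋ] [InnerProductSpace ℂ ℋ] [CompleteSpace ℋ]
    (e : HilbertBasis ℕ ℂ ℋ) (E : ℕ → ℝ)
    (hdist : Function.Injective E)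
    (N : ℕ) (hne : ∀ n, N ≤ n → E n ≠ 0)
    (hsum : Summable fun n : ℕ => 1 / (E (n + N)) ^ 2) :
    (∀ φ ∈ Submodule.span ℂ (Set.range e),
      Summable fun n : ℕ => ‖timeOpCoeff e E φ n‖ ^ 2) ∧
    (∀ φ ∈ Submodule.span ℂ (Set.range e),
      Summable fun n : ℕ => timeOpCoeff e E φ n • (e n : ℋ)) ∧
    (∀ φ ∈ Submodule.span ℂ (Set.range e), ∀ ψ ∈ Submodule.span ℂ (Set.range e),
      ⟪timeOp e E φ, ψ⟫_ℂ = ⟪φ, timeOp e E ψ⟫_ℂ) :=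
  timeOp_well_defined_and_symmetric_general e E N hne hsum
end

section
/- Let ℋ be a complex Hilbert space with Hilbert (orthonormal) basis (e_n)_{n∈ℕ} and let (E_n)_{n∈ℕ} be pairwise distinct real numbers such that for some N, E_n ≠ 0 for all n ≥ N and ∑_{n≥N} 1/E_n² < ∞. Let H be the diagonal operator with domain D(H) = {φ ∈ ℋ : ∑_n E_n² |⟨e_n,φ⟩|² < ∞} acting by Hφ = ∑_n E_n ⟨e_n,φ⟩ e_n, let 𝓕 be the span of {e_n}, and let T : 𝓕 → ℋ be defined by Tφ := i ∑_n ( ∑_{m≠n} ⟨e_m,φ⟩/(E_n − E_m) ) e_n. Then for every ψ in ℰ := span{e_n − e_m : n, m ∈ ℕ} one has Hψ ∈ 𝓕, Tψ ∈ D(H), and H(Tψ) − T(Hψ) = −iψ. -/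
open scoped InnerProductSpace

/-- The action of the diagonal operator `diag(λ)` associated with a Hilbert basis `e`:
`φ ↦ ∑_n λ_n ⟨e_n, φ⟩ e_n`. -/
noncomputable def diagOp {ℋ : Type*} [NormedAddCommGroup ℋ] [InnerProductSpace ℂ ℋ]
    (e : HilbertBasis ℕ ℂ ℋ) (lam : ℕ → ℝ) (φ : ℋ) : ℋ :=
  ∑' n : ℕ, ((lam n : ℂ) * ⟪e n, φ⟫_ℂ) • e n

/-- The domain of the diagonal operator `diag(λ)`:
`{φ : ∑_n λ_n² |⟨e_n, φ⟩|² < ∞}`. -/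
def diagDom {ℋ : Type*} [NormedAddCommGroup ℋ] [InnerProductSpace ℂ ℋ]
    (e : HilbertBasis ℕ ℂ ℋ) (lam : ℕ → ℝ) : Set ℋ :=
  {φ | Summable fun n : ℕ => (lam n) ^ 2 * ‖⟪e n, φ⟫_ℂ‖ ^ 2}

set_option maxHeartbeats 1600000 in
lemma timeOp_ccr_key {ℋ : Type*} [NormedAddCommGroup ℋ] [InnerProductSpace ℂ ℋ]
    [CompleteSpace ℋ]
    (e : HilbertBasis ℕ ℂ ℋ) (E : ℕ → ℝ)
    (hdist : Function.Injective E)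
    (N : ℕ) (hne : ∀ n, N ≤ n → E n ≠ 0)
    (hsum : Summable fun n : ℕ => 1 / (E (n + N)) ^ 2)
    (s : Finset ℕ) (a : ℕ → ℂ) (hvan : ∀ k, k ∉ s → a k = 0) (hzero : ∑ k ∈ s, a k = 0)
    (ψ : ℋ) (hψ : ψ = ∑ k ∈ s, a k • e k) :
    diagOp e E ψ ∈ Submodule.span ℂ (Set.range e) ∧
      timeOp e E ψ ∈ diagDom e E ∧
      diagOp e E (timeOp e E ψ) - timeOp e E (diagOp e E ψ) = -Complex.I • ψ := by
  classical
  have hite : ∀ i j : ℕ, ⟪e i, e j⟫_ℂ = if i = j then 1 else 0 :=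
    orthonormal_iff_ite.mp e.orthonormal
  -- coefficients of ψ
  have hinner : ∀ j, ⟪e j, ψ⟫_ℂ = a j := by
    intro j
    rw [hψ, inner_sum]
    simp only [inner_smul_right, hite, mul_ite, mul_one, mul_zero]
    by_cases hj : j ∈ s
    · simp [Finset.sum_ite_eq, hj]
    · simp [Finset.sum_ite_eq, hj, hvan j hj]
  -- diagOp ψ as a finite sum
  have hdiag : diagOp e E ψ = ∑ k ∈ s, ((E k : ℂ) * a k) • e k := by
    rw [diagOp, tsum_eq_sum (s := s)
      (fun k hk => by rw [hinner, hvan k hk, mul_zero, zero_smul])]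
    exact Finset.sum_congr rfl fun k _ => by rw [hinner]
  have hmem1 : diagOp e E ψ ∈ Submodule.span ℂ (Set.range e) := by
    rw [hdiag]
    exact Submodule.sum_mem _ fun k _ => Submodule.smul_mem _ _ (Submodule.subset_span ⟨k, rfl⟩)
  -- coefficients of diagOp ψ
  have hinnerH : ∀ j, ⟪e j, diagOp e E ψ⟫_ℂ = (E j : ℂ) * a j := by
    intro j
    rw [hdiag, inner_sum]
    simp only [inner_smul_right, hite, mul_ite, mul_one, mul_zero]
    by_cases hj : j ∈ s
    · simp [Finset.sum_ite_eq, hj]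
    · simp [Finset.sum_ite_eq, hj, hvan j hj]
  -- the finite-sum formulas for the time-operator coefficients
  set c : ℕ → ℂ := fun k => ∑ m ∈ s, if m = k then 0 else a m / ((E k : ℂ) - (E m : ℂ))
    with hc_def
  set d : ℕ → ℂ :=
    fun k => ∑ m ∈ s, if m = k then 0 else ((E m : ℂ) * a m) / ((E k : ℂ) - (E m : ℂ))
    with hd_def
  have hc : ∀ k, timeOpCoeff e E ψ k = c k := by
    intro k
    rw [timeOpCoeff, tsum_eq_sum (s := s)
      (fun m hm => by rw [hinner, hvan m hm]; simp)]
    exact Finset.sum_congr rfl fun m _ => by rw [hinner]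
  have hd : ∀ k, timeOpCoeff e E (diagOp e E ψ) k = d k := by
    intro k
    rw [timeOpCoeff, tsum_eq_sum (s := s)
      (fun m hm => by rw [hinnerH, hvan m hm]; simp)]
    exact Finset.sum_congr rfl fun m _ => by rw [hinnerH]
  -- the key pointwise identity
  have hkey : ∀ k, (E k : ℂ) * c k - d k = -a k := by
    intro k
    rw [hc_def, hd_def, Finset.mul_sum, ← Finset.sum_sub_distrib]
    have h1 : ∀ m ∈ s,
        ((E k : ℂ) * (if m = k then 0 else a m / ((E k : ℂ) - (E m : ℂ))) -
          (if m = k then 0 else ((E m : ℂ) * a m) / ((E k : ℂ) - (E m : ℂ))))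
          = if m = k then 0 else a m := by
      intro m _
      by_cases hmk : m = k
      · simp [hmk]
      · have hEk : (E k : ℂ) ≠ (E m : ℂ) := by
          intro h
          exact hmk (hdist (by exact_mod_cast h)).symm
        have hne' : (E k : ℂ) - (E m : ℂ) ≠ 0 := sub_ne_zero.mpr hEk
        simp only [if_neg hmk]
        field_simp
    rw [Finset.sum_congr rfl h1]
    have h2 : ∀ m ∈ s, (if m = k then (0:ℂ) else a m) = a m - (if m = k then a k else 0) := by
      intro m _
      by_cases hmk : m = k <;> simp [hmk]
    rw [Finset.sum_congr rfl h2, Finset.sum_sub_distrib, hzero,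
      Finset.sum_ite_eq' s k (fun _ => a k)]
    by_cases hk : k ∈ s
    · simp [hk]
    · simp [hk, hvan k hk]
  have hdformula : ∀ k, d k = (E k : ℂ) * c k + a k := by
    intro k
    have := hkey k
    linear_combination -this
  -- bounds
  set B : ℝ := ∑ m ∈ s, |E m| with hB_def
  set A : ℝ := ∑ m ∈ s, ‖a m‖ * |E m| with hA_def
  have hB0 : 0 ≤ B := Finset.sum_nonneg fun m _ => abs_nonneg _
  have hA0 : 0 ≤ A := Finset.sum_nonneg fun m _ => mul_nonneg (norm_nonneg _) (abs_nonneg _)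
  have hB : ∀ m ∈ s, |E m| ≤ B := fun m hm =>
    Finset.single_le_sum (fun i _ => abs_nonneg (E i)) hm
  set L : ℝ := max 1 (2 * B + 1) with hL_def
  have hL1 : (1:ℝ) ≤ L := le_max_left _ _
  have hLB : 2 * B + 1 ≤ L := le_max_right _ _
  have hsum' : Summable fun n : ℕ => 1 / (E n) ^ 2 := (summable_nat_add_iff N).mp hsum
  have htend : Filter.Tendsto (fun n => 1 / (E n) ^ 2) Filter.atTop (nhds 0) :=
    hsum'.tendsto_atTop_zero
  have hev : ∀ᶠ k in Filter.atTop, 1 / (E k) ^ 2 < 1 / L ^ 2 :=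
    htend.eventually_lt_const (by positivity)
  obtain ⟨M₀, hM₀⟩ := Filter.eventually_atTop.mp hev
  set M : ℕ := max M₀ N with hM_def
  have hMabs : ∀ k, M ≤ k → L ≤ |E k| := by
    intro k hk
    have hkN : N ≤ k := le_trans (le_max_right _ _) hk
    have hEk0 : E k ≠ 0 := hne k hkN
    have hEk2 : (0:ℝ) < (E k) ^ 2 := by positivity
    have h1 : 1 / (E k) ^ 2 < 1 / L ^ 2 := hM₀ k (le_trans (le_max_left _ _) hk)
    have h2 : L ^ 2 < (E k) ^ 2 := by
      by_contra hcon
      push_neg at hcon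
      have := one_div_le_one_div_of_le hEk2 hcon
      linarith
    nlinarith [sq_abs (E k), abs_nonneg (E k)]
  have hMs : ∀ k, M ≤ k → k ∉ s := by
    intro k hk hks
    have := hB k hks
    have := hMabs k hk
    linarith
  -- tail bound for c
  have hcb : ∀ k, M ≤ k → ‖c k‖ ≤ 2 * A / (E k) ^ 2 := by
    intro k hk
    have hLk : L ≤ |E k| := hMabs k hk
    have hks : k ∉ s := hMs k hk
    have h1L : (1:ℝ) ≤ |E k| := le_trans hL1 hLk
    have hEk0 : E k ≠ 0 := by
      intro h
      rw [h, abs_zero] at h1L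
      linarith
    have hEkC : (E k : ℂ) ≠ 0 := by exact_mod_cast hEk0
    have hEk2 : (0:ℝ) < (E k) ^ 2 := by positivity
    have h1 : c k = ∑ m ∈ s, a m * ((E m : ℂ) / (((E k : ℂ) - (E m : ℂ)) * (E k : ℂ))) := by
      have e1 : c k = ∑ m ∈ s, (a m / ((E k : ℂ) - (E m : ℂ)) - a m * (1 / (E k : ℂ))) := by
        rw [Finset.sum_sub_distrib]
        have h3 : ∑ m ∈ s, a m * (1 / (E k : ℂ)) = 0 := by
          rw [← Finset.sum_mul, hzero, zero_mul]
        rw [h3, sub_zero, hc_def]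
        refine Finset.sum_congr rfl fun m hm => if_neg fun h => hks ?_
        rwa [h] at hm
      rw [e1]
      refine Finset.sum_congr rfl fun m hm => ?_
      have hkm : k ≠ m := fun h => hks (h ▸ hm)
      have hEkm : (E k : ℂ) ≠ (E m : ℂ) := by
        intro h
        exact hkm (hdist (by exact_mod_cast h))
      have hsub : (E k : ℂ) - (E m : ℂ) ≠ 0 := sub_ne_zero.mpr hEkm
      field_simp
      ring
    rw [h1]
    calc ‖∑ m ∈ s, a m * ((E m : ℂ) / (((E k : ℂ) - (E m : ℂ)) * (E k : ℂ)))‖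
        ≤ ∑ m ∈ s, ‖a m * ((E m : ℂ) / (((E k : ℂ) - (E m : ℂ)) * (E k : ℂ)))‖ :=
          norm_sum_le _ _
      _ ≤ ∑ m ∈ s, ‖a m‖ * |E m| * (2 / (E k) ^ 2) := by
          refine Finset.sum_le_sum fun m hm => ?_
          have hEm : |E m| ≤ B := hB m hm
          have h2B : 2 * B + 1 ≤ |E k| := le_trans hLB hLk
          have hlow : |E k| / 2 ≤ |E k - E m| := by
            have := abs_sub_abs_le_abs_sub (E k) (E m)
            linarith
          have hnorm : ‖a m * ((E m : ℂ) / (((E k : ℂ) - (E m : ℂ)) * (E k : ℂ)))‖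
              = ‖a m‖ * (|E m| / (|E k - E m| * |E k|)) := by
            have hcast : (E k : ℂ) - (E m : ℂ) = ((E k - E m : ℝ) : ℂ) := by push_cast; ring
            rw [norm_mul, norm_div, norm_mul, hcast, Complex.norm_real, Complex.norm_real,
              Complex.norm_real, Real.norm_eq_abs, Real.norm_eq_abs, Real.norm_eq_abs]
          rw [hnorm]
          have hpos : (0:ℝ) < |E k - E m| * |E k| := by
            have : (0:ℝ) < |E k - E m| := lt_of_lt_of_le (by linarith) hlow
            have h4 : (0:ℝ) < |E k| := by linarith
            positivity
          have hden : (E k) ^ 2 / 2 ≤ |E k - E m| * |E k| := by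
            nlinarith [sq_abs (E k)]
          have h4 : |E m| / (|E k - E m| * |E k|) ≤ |E m| / ((E k) ^ 2 / 2) :=
            div_le_div_of_nonneg_left (abs_nonneg _) (by positivity) hden
          have h5 : |E m| / ((E k) ^ 2 / 2) = |E m| * (2 / (E k) ^ 2) := by
            field_simp
          calc ‖a m‖ * (|E m| / (|E k - E m| * |E k|))
              ≤ ‖a m‖ * (|E m| * (2 / (E k) ^ 2)) := by
                refine mul_le_mul_of_nonneg_left ?_ (norm_nonneg _)
                rw [← h5]; exact h4
            _ = ‖a m‖ * |E m| * (2 / (E k) ^ 2) := by ring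
      _ = 2 * A / (E k) ^ 2 := by
          rw [hA_def, ← Finset.sum_mul]
          ring
  -- summability
  have hsumc2 : Summable fun k => (1 + (E k) ^ 2) * ‖c k‖ ^ 2 := by
    rw [← summable_nat_add_iff M]
    have hcomp : Summable fun k => 8 * A ^ 2 * (1 / (E (k + M)) ^ 2) :=
      ((summable_nat_add_iff M).mpr hsum').mul_left _
    refine Summable.of_nonneg_of_le (fun k => by positivity) (fun k => ?_) hcomp
    have hk : M ≤ k + M := Nat.le_add_left _ _
    have hLk := hMabs (k + M) hk
    have h1L : (1:ℝ) ≤ |E (k + M)| := le_trans hL1 hLk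
    have h1 : (1:ℝ) ≤ (E (k + M)) ^ 2 := by nlinarith [sq_abs (E (k + M))]
    have hEk2 : (0:ℝ) < (E (k + M)) ^ 2 := by linarith
    have hcb' := hcb (k + M) hk
    have hnn : (0:ℝ) ≤ ‖c (k + M)‖ := norm_nonneg _
    have hb2 : ‖c (k + M)‖ ^ 2 ≤ (2 * A / (E (k + M)) ^ 2) ^ 2 :=
      pow_le_pow_left₀ hnn hcb' 2
    calc (1 + (E (k + M)) ^ 2) * ‖c (k + M)‖ ^ 2
        ≤ (2 * (E (k + M)) ^ 2) * ‖c (k + M)‖ ^ 2 := by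
          have := sq_nonneg ‖c (k + M)‖
          nlinarith
      _ ≤ (2 * (E (k + M)) ^ 2) * ((2 * A / (E (k + M)) ^ 2) ^ 2) := by
          refine mul_le_mul_of_nonneg_left hb2 (by linarith)
      _ = 8 * A ^ 2 * (1 / (E (k + M)) ^ 2) := by
          field_simp
          ring
  have hsumc : Summable fun k => ‖c k‖ ^ 2 :=
    Summable.of_nonneg_of_le (fun k => by positivity)
      (fun k => by nlinarith [sq_nonneg (E k), sq_nonneg ‖c k‖]) hsumc2
  have hsumEc : Summable fun k => (E k) ^ 2 * ‖c k‖ ^ 2 :=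
    Summable.of_nonneg_of_le (fun k => by positivity)
      (fun k => by nlinarith [sq_nonneg ‖c k‖]) hsumc2
  have hsuma : Summable fun k => ‖a k‖ ^ 2 :=
    summable_of_ne_finset_zero (s := s) fun k hk => by rw [hvan k hk]; simp
  have hsumd : Summable fun k => ‖d k‖ ^ 2 := by
    have h1 : Summable fun k => 2 * ((E k) ^ 2 * ‖c k‖ ^ 2) + 2 * ‖a k‖ ^ 2 :=
      (hsumEc.mul_left 2).add (hsuma.mul_left 2)
    refine Summable.of_nonneg_of_le (fun k => by positivity) (fun k => ?_) h1
    rw [hdformula k]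
    have h2 := norm_add_le ((E k : ℂ) * c k) (a k)
    have h3 : ‖(E k : ℂ) * c k‖ = |E k| * ‖c k‖ := by
      rw [norm_mul, Complex.norm_real, Real.norm_eq_abs]
    rw [h3] at h2
    nlinarith [norm_nonneg (a k), norm_nonneg (c k), abs_nonneg (E k), sq_abs (E k),
      norm_nonneg ((E k : ℂ) * c k + a k), sq_nonneg (|E k| * ‖c k‖ - ‖a k‖)]
  -- construction of vectors from square-summable coefficients
  have mk : ∀ g : ℕ → ℂ, Summable (fun k => ‖g k‖ ^ 2) →
      ∃ v : ℋ, HasSum (fun k => g k • e k) v ∧ ∀ j, ⟪e j, v⟫_ℂ = g j := by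
    intro g hg
    have hmem : Memℓp g 2 := memℓp_gen (by simpa using hg)
    exact ⟨e.repr.symm ⟨g, hmem⟩, e.hasSum_repr_symm ⟨g, hmem⟩, fun j => by
      rw [← e.repr_apply_apply]; simp⟩
  obtain ⟨v1, hv1, hv1i⟩ := mk c hsumc
  obtain ⟨v3, hv3, hv3i⟩ := mk d hsumd
  have hTψ : timeOp e E ψ = Complex.I • v1 := by
    rw [timeOp]
    congr 1
    rw [show (fun n => timeOpCoeff e E ψ n • e n) = fun n => c n • e n from
      funext fun n => by rw [hc n], hv1.tsum_eq]
  have hT_dom : timeOp e E ψ ∈ diagDom e E := by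
    show Summable fun n : ℕ => (E n) ^ 2 * ‖⟪e n, timeOp e E ψ⟫_ℂ‖ ^ 2
    have h1 : (fun n : ℕ => (E n) ^ 2 * ‖⟪e n, timeOp e E ψ⟫_ℂ‖ ^ 2)
        = fun n => (E n) ^ 2 * ‖c n‖ ^ 2 := by
      funext n
      rw [hTψ, inner_smul_right, hv1i, norm_mul, Complex.norm_I, one_mul]
    rw [h1]
    exact hsumEc
  -- H T ψ
  have hsumEIc : Summable fun k => ‖(E k : ℂ) * (Complex.I * c k)‖ ^ 2 := by
    have h1 : (fun k => ‖(E k : ℂ) * (Complex.I * c k)‖ ^ 2)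
        = fun k => (E k) ^ 2 * ‖c k‖ ^ 2 := by
      funext k
      rw [norm_mul, norm_mul, Complex.norm_I, one_mul, Complex.norm_real, Real.norm_eq_abs,
        mul_pow, sq_abs]
    rw [h1]
    exact hsumEc
  obtain ⟨v2, hv2, hv2i⟩ := mk (fun k => (E k : ℂ) * (Complex.I * c k)) hsumEIc
  have hHTψ : diagOp e E (timeOp e E ψ) = v2 := by
    rw [diagOp]
    rw [show (fun n => ((E n : ℂ) * ⟪e n, timeOp e E ψ⟫_ℂ) • e n)
        = fun n => ((E n : ℂ) * (Complex.I * c n)) • e n from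
      funext fun n => by rw [hTψ, inner_smul_right, hv1i], hv2.tsum_eq]
  -- T H ψ
  have hTHψ : timeOp e E (diagOp e E ψ) = Complex.I • v3 := by
    rw [timeOp]
    congr 1
    rw [show (fun n => timeOpCoeff e E (diagOp e E ψ) n • e n) = fun n => d n • e n from
      funext fun n => by rw [hd n], hv3.tsum_eq]
  -- the CCR identity
  refine ⟨hmem1, hT_dom, ?_⟩
  rw [hHTψ, hTHψ]
  have h3 : HasSum (fun k => (Complex.I * d k) • e k) (Complex.I • v3) := by
    have := hv3.const_smul Complex.I
    simpa [smul_smul] using this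
  have h1 : HasSum (fun k => ((E k : ℂ) * (Complex.I * c k) - Complex.I * d k) • e k)
      (v2 - Complex.I • v3) := by
    simpa [sub_smul] using hv2.sub h3
  have h2 : ∀ k, (E k : ℂ) * (Complex.I * c k) - Complex.I * d k = -Complex.I * a k := by
    intro k
    have := hkey k
    linear_combination Complex.I * this
  rw [show (fun k => ((E k : ℂ) * (Complex.I * c k) - Complex.I * d k) • e k)
      = fun k => (-Complex.I * a k) • e k from funext fun k => by rw [h2 k]] at h1
  have h4 : HasSum (fun k => (-Complex.I * a k) • e k)
      (∑ k ∈ s, (-Complex.I * a k) • e k) :=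
    hasSum_sum_of_ne_finset_zero fun k hk => by rw [hvan k hk]; simp
  have h5 : (∑ k ∈ s, (-Complex.I * a k) • e k) = -Complex.I • ψ := by
    rw [hψ, Finset.smul_sum]
    exact Finset.sum_congr rfl fun k _ => by rw [smul_smul]
  exact h1.unique (h5 ▸ h4)

/-- on `ℰ = span{e_n - e_m}` the time operator `T` satisfies the CCR
`HTψ - THψ = -iψ` with the diagonal operator `H = diag(E_n)`. -/
theorem timeOp_ccr_discrete
    {ℋ : Type*} [NormedAddCommGroup ℋ] [InnerProductSpace ℂ ℋ] [CompleteSpace ℋ]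
    (e : HilbertBasis ℕ ℂ ℋ) (E : ℕ → ℝ)
    (hdist : Function.Injective E)
    (N : ℕ) (hne : ∀ n, N ≤ n → E n ≠ 0)
    (hsum : Summable fun n : ℕ => 1 / (E (n + N)) ^ 2) :
    ∀ ψ ∈ Submodule.span ℂ {x : ℋ | ∃ n m : ℕ, x = e n - e m},
      diagOp e E ψ ∈ Submodule.span ℂ (Set.range e) ∧
      timeOp e E ψ ∈ diagDom e E ∧
      diagOp e E (timeOp e E ψ) - timeOp e E (diagOp e E ψ) = -Complex.I • ψ := by
  classical
  intro ψ hψ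
  have hrep : ∃ (s : Finset ℕ) (a : ℕ → ℂ),
      (∀ k, k ∉ s → a k = 0) ∧ ∑ k ∈ s, a k = 0 ∧ ψ = ∑ k ∈ s, a k • e k := by
    induction hψ using Submodule.span_induction with
    | mem x hx =>
        obtain ⟨n, m, rfl⟩ := hx
        refine ⟨{n, m}, fun k => (if k = n then 1 else 0) - (if k = m then 1 else 0), ?_, ?_, ?_⟩
        · intro k hk
          simp only [Finset.mem_insert, Finset.mem_singleton, not_or] at hk
          simp [hk.1, hk.2]
        · simp [Finset.sum_sub_distrib, Finset.sum_ite_eq']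
        · simp [sub_smul, ite_smul, Finset.sum_sub_distrib, Finset.sum_ite_eq']
    | zero => exact ⟨∅, 0, by simp, by simp, by simp⟩
    | add x y hx hy ihx ihy =>
        obtain ⟨s, a, hva, hsa, rfl⟩ := ihx
        obtain ⟨t, b, hvb, hsb, rfl⟩ := ihy
        refine ⟨s ∪ t, a + b, ?_, ?_, ?_⟩
        · intro k hk
          rw [Finset.mem_union, not_or] at hk
          simp [hva k hk.1, hvb k hk.2]
        · have h1 : ∑ k ∈ s ∪ t, a k = ∑ k ∈ s, a k :=
            (Finset.sum_subset Finset.subset_union_left fun k _ hk => hva k hk).symm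
          have h2 : ∑ k ∈ s ∪ t, b k = ∑ k ∈ t, b k :=
            (Finset.sum_subset Finset.subset_union_right fun k _ hk => hvb k hk).symm
          simp [Finset.sum_add_distrib, h1, h2, hsa, hsb]
        · have h1 : ∑ k ∈ s ∪ t, a k • e k = ∑ k ∈ s, a k • e k :=
            (Finset.sum_subset Finset.subset_union_left fun k _ hk => by
              rw [hva k hk, zero_smul]).symm
          have h2 : ∑ k ∈ s ∪ t, b k • e k = ∑ k ∈ t, b k • e k :=
            (Finset.sum_subset Finset.subset_union_right fun k _ hk => by
              rw [hvb k hk, zero_smul]).symm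
          simp [add_smul, Finset.sum_add_distrib, h1, h2]
    | smul r x hx ihx =>
        obtain ⟨s, a, hva, hsa, rfl⟩ := ihx
        refine ⟨s, r • a, ?_, ?_, ?_⟩
        · intro k hk
          simp [hva k hk]
        · simp only [Pi.smul_apply, smul_eq_mul, ← Finset.mul_sum, hsa, mul_zero]
        · rw [Finset.smul_sum]
          exact Finset.sum_congr rfl fun k _ => by simp [Pi.smul_apply, smul_smul]
  obtain ⟨s, a, hva, hsa, hψeq⟩ := hrep
  exact timeOp_ccr_key e E hdist N hne hsum s a hva hsa ψ hψeq
end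

section
/- Let ℋ be a complex Hilbert space and U_1, …, U_n one-parameter unitary groups on ℋ that pairwise commute: U_k(s)U_l(t) = U_l(t)U_k(s) for all k, l and s, t ∈ ℝ. Fix j and let T be a symmetric operator with domain D(T) satisfying the weak Weyl relation with respect to U_j (for all t, U_j(t)(D(T)) ⊆ D(T) and T(U_j(t)ψ) = U_j(t)(Tψ + tψ) for ψ ∈ D(T)), and suppose that for every k ≠ j and every t ∈ ℝ: U_k(t)(D(T)) = D(T) and T(U_k(t)ψ) = U_k(t)(Tψ) for all ψ ∈ D(T). Define V(t) := U_1(t)∘U_2(t)∘⋯∘U_n(t). Then V is a one-parameter unitary group and T satisfies the weak Weyl relation with respect to V: for all t ∈ ℝ, V(t)(D(T)) ⊆ D(T) and T(V(t)ψ) = V(t)(Tψ + tψ) for all ψ ∈ D(T). -/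
open scoped InnerProductSpace

/-- The composition `V(t) = U_1(t) ∘ U_2(t) ∘ ⋯ ∘ U_n(t)` of `n` one-parameter unitary
groups (multiplication of linear isometry equivalences is composition). -/
noncomputable def prodGroup {ℋ : Type*} [NormedAddCommGroup ℋ] [InnerProductSpace ℂ ℋ]
    {n : ℕ} (U : Fin n → ℝ → (ℋ ≃ₗᵢ[ℂ] ℋ)) (t : ℝ) : ℋ ≃ₗᵢ[ℂ] ℋ :=
  (List.ofFn fun k => U k t).prod

/-!
Each factor `U_k(t)` of `V(t)` transforms `T` like a translation: `T U_j(t) = U_j(t) (T + t)` and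
`T U_k(t) = U_k(t) T` for `k ≠ j`. Such shifts compose additively, so `V(t)` shifts `T` by
`t + 0 + ⋯ + 0 = t`. The group law for `V` holds because the factors pairwise commute.
-/

theorem List.prod_ofFn_mul_of_commute {M : Type*} [Monoid M] {n : ℕ} (f g : Fin n → M)
    (hfg : ∀ k l, Commute (f k) (g l)) :
    (List.ofFn fun k => f k * g k).prod = (List.ofFn f).prod * (List.ofFn g).prod := by
  induction n with
  | zero => simp
  | succ n ih =>
    have hg₀ : Commute (g 0) (List.ofFn fun k => f k.succ).prod :=
      Commute.list_prod_right _ _ (List.forall_mem_ofFn_iff.2 fun k => (hfg k.succ 0).symm)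
    simp only [List.ofFn_succ, List.prod_cons,
      ih (fun k => f k.succ) (fun k => g k.succ) fun k l => hfg k.succ l.succ]
    rw [mul_assoc, ← mul_assoc (g 0), hg₀.eq]
    simp only [mul_assoc]

section ShiftsBy

variable {𝕜 E : Type*} [Ring 𝕜] [SeminormedAddCommGroup E] [Module 𝕜 E]
  {T : E →ₗ.[𝕜] E}

/-- The weak Weyl relation for a unitary group `U` is `∀ t, ShiftsBy T t (U t)`. -/
def ShiftsBy (T : E →ₗ.[𝕜] E) (c : 𝕜) (e : E ≃ₗᵢ[𝕜] E) : Prop :=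
  ∀ (ψ : E) (hψ : ψ ∈ T.domain), ∃ h' : e ψ ∈ T.domain, T ⟨e ψ, h'⟩ = e (T ⟨ψ, hψ⟩ + c • ψ)

theorem ShiftsBy.one : ShiftsBy T 0 1 :=
  fun ψ hψ => ⟨hψ, by simp⟩

theorem ShiftsBy.of_commute {e : E ≃ₗᵢ[𝕜] E} (hmaps : Set.MapsTo e T.domain T.domain)
    (hcomm : ∀ (ψ : E) (hψ : ψ ∈ T.domain) (h' : e ψ ∈ T.domain),
      T ⟨e ψ, h'⟩ = e (T ⟨ψ, hψ⟩)) :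
    ShiftsBy T 0 e :=
  fun ψ hψ => ⟨hmaps hψ, by rw [hcomm ψ hψ, zero_smul, add_zero]⟩

theorem ShiftsBy.mul {a b : 𝕜} {e f : E ≃ₗᵢ[𝕜] E} (he : ShiftsBy T a e) (hf : ShiftsBy T b f) :
    ShiftsBy T (a + b) (e * f) := by
  intro ψ hψ
  obtain ⟨hfψ, hTf⟩ := hf ψ hψ
  obtain ⟨hefψ, hTef⟩ := he (f ψ) hfψ
  refine ⟨hefψ, ?_⟩
  calc T ⟨e (f ψ), hefψ⟩ = e (f (T ⟨ψ, hψ⟩ + b • ψ) + a • f ψ) := by rw [hTef, hTf]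
    _ = e (f (T ⟨ψ, hψ⟩ + (a + b) • ψ)) := by
      rw [← map_smul, ← map_add, add_assoc, ← add_smul, add_comm b]

theorem ShiftsBy.prod_ofFn {n : ℕ} {c : Fin n → 𝕜} {e : Fin n → E ≃ₗᵢ[𝕜] E}
    (h : ∀ k, ShiftsBy T (c k) (e k)) : ShiftsBy T (∑ k, c k) (List.ofFn e).prod := by
  induction n with
  | zero => simpa using ShiftsBy.one
  | succ n ih =>
    rw [Fin.sum_univ_succ, List.ofFn_succ, List.prod_cons]
    exact (h 0).mul (ih fun k => h k.succ)

end ShiftsBy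

section prodGroup

variable {ℋ : Type*} [NormedAddCommGroup ℋ] [InnerProductSpace ℂ ℋ] {n : ℕ}
  {U : Fin n → ℝ → (ℋ ≃ₗᵢ[ℂ] ℋ)}

theorem prodGroup_zero (hU0 : ∀ k, U k 0 = 1) : prodGroup U 0 = 1 := by
  simp [prodGroup, hU0]

theorem prodGroup_add (hUadd : ∀ k s t, U k (s + t) = U k s * U k t)
    (hcomm : ∀ k l s t, Commute (U k s) (U l t)) (s t : ℝ) :
    prodGroup U (s + t) = prodGroup U s * prodGroup U t := by
  simp only [prodGroup, hUadd]
  exact List.prod_ofFn_mul_of_commute _ _ fun k l => hcomm k l s t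

end prodGroup

theorem strong_time_operator_of_product_group_general
    {ℋ : Type*} [NormedAddCommGroup ℋ] [InnerProductSpace ℂ ℋ]
    (n : ℕ) (U : Fin n → ℝ → (ℋ ≃ₗᵢ[ℂ] ℋ))
    (hU0 : ∀ k, ∀ x : ℋ, U k 0 x = x)
    (hUadd : ∀ k, ∀ s t : ℝ, ∀ x : ℋ, U k (s + t) x = U k s (U k t x))
    (hcomm : ∀ k l, ∀ s t : ℝ, ∀ x : ℋ, U k s (U l t x) = U l t (U k s x))
    (j : Fin n) (T : ℋ →ₗ.[ℂ] ℋ)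
    (hWW : ∀ (t : ℝ) (ψ : ℋ) (hψ : ψ ∈ T.domain),
      ∃ h' : U j t ψ ∈ T.domain, T ⟨U j t ψ, h'⟩ = U j t (T ⟨ψ, hψ⟩ + t • ψ))
    (hcommT : ∀ k, k ≠ j → ∀ t : ℝ,
      (U k t '' (T.domain : Set ℋ) = (T.domain : Set ℋ)) ∧
      ∀ (ψ : ℋ) (hψ : ψ ∈ T.domain) (h' : U k t ψ ∈ T.domain),
        T ⟨U k t ψ, h'⟩ = U k t (T ⟨ψ, hψ⟩)) :
    (∀ x : ℋ, prodGroup U 0 x = x) ∧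
    (∀ s t : ℝ, ∀ x : ℋ, prodGroup U (s + t) x = prodGroup U s (prodGroup U t x)) ∧
    (∀ (t : ℝ) (ψ : ℋ) (hψ : ψ ∈ T.domain),
      ∃ h' : prodGroup U t ψ ∈ T.domain,
        T ⟨prodGroup U t ψ, h'⟩ = prodGroup U t (T ⟨ψ, hψ⟩ + t • ψ)) := by
  have hV0 := prodGroup_zero fun k => LinearIsometryEquiv.ext (hU0 k)
  have hVadd := prodGroup_add (fun k s t => LinearIsometryEquiv.ext (hUadd k s t))
    fun k l s t => LinearIsometryEquiv.ext (hcomm k l s t)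
  refine ⟨fun x => by rw [hV0]; rfl, fun s t x => by rw [hVadd]; rfl, fun t => ?_⟩
  have hshift : ∀ k, ShiftsBy T (if k = j then (t : ℂ) else 0) (U k t) := by
    intro k
    split_ifs with hkj
    · subst hkj
      simpa only [ShiftsBy, Complex.coe_smul] using hWW t
    · obtain ⟨himage, hTcomm⟩ := hcommT k hkj t
      exact .of_commute ((Set.mapsTo_image _ _).mono_right himage.subset) hTcomm
  have hV : ShiftsBy T (t : ℂ) (prodGroup U t) := by
    simpa only [prodGroup, Finset.sum_ite_eq', Finset.mem_univ, if_true] using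
      ShiftsBy.prod_ofFn hshift
  simpa only [ShiftsBy, Complex.coe_smul] using hV

/-- if `T` is a strong time operator of `U_j` (weak Weyl relation) and, for
`k ≠ j`, `U_k(t)` leaves `D(T)` invariant and commutes with `T`, then `T` is a strong
time operator of the product group `V(t) = U_1(t) ∘ ⋯ ∘ U_n(t)` of the pairwise commuting
groups `U_1, …, U_n`. -/
theorem strong_time_operator_of_product_group
    {ℋ : Type*} [NormedAddCommGroup ℋ] [InnerProductSpace ℂ ℋ]
    (n : ℕ) (U : Fin n → ℝ → (ℋ ≃ₗᵢ[ℂ] ℋ))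
    (hU0 : ∀ k, ∀ x : ℋ, U k 0 x = x)
    (hUadd : ∀ k, ∀ s t : ℝ, ∀ x : ℋ, U k (s + t) x = U k s (U k t x))
    (hcomm : ∀ k l, ∀ s t : ℝ, ∀ x : ℋ, U k s (U l t x) = U l t (U k s x))
    (j : Fin n) (T : ℋ →ₗ.[ℂ] ℋ)
    (hTsymm : ∀ φ ψ : T.domain, ⟪T φ, (ψ : ℋ)⟫_ℂ = ⟪(φ : ℋ), T ψ⟫_ℂ)
    (hWW : ∀ (t : ℝ) (ψ : ℋ) (hψ : ψ ∈ T.domain),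
      ∃ h' : U j t ψ ∈ T.domain, T ⟨U j t ψ, h'⟩ = U j t (T ⟨ψ, hψ⟩ + t • ψ))
    (hcommT : ∀ k, k ≠ j → ∀ t : ℝ,
      (U k t '' (T.domain : Set ℋ) = (T.domain : Set ℋ)) ∧
      ∀ (ψ : ℋ) (hψ : ψ ∈ T.domain) (h' : U k t ψ ∈ T.domain),
        T ⟨U k t ψ, h'⟩ = U k t (T ⟨ψ, hψ⟩)) :
    (∀ x : ℋ, prodGroup U 0 x = x) ∧
    (∀ s t : ℝ, ∀ x : ℋ, prodGroup U (s + t) x = prodGroup U s (prodGroup U t x)) ∧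
    (∀ (t : ℝ) (ψ : ℋ) (hψ : ψ ∈ T.domain),
      ∃ h' : prodGroup U t ψ ∈ T.domain,
        T ⟨prodGroup U t ψ, h'⟩ = prodGroup U t (T ⟨ψ, hψ⟩ + t • ψ)) :=
  strong_time_operator_of_product_group_general n U hU0 hUadd hcomm j T hWW hcommT
end

section
/- Let ρ : ℝ → ℝ be a differentiable function with ρ ≥ 0, ∫_ℝ ρ(λ) dλ < ∞, lim_{λ→±∞} ρ(λ) = 0, and ∫_{{ρ>0}} ρ'(λ)²/ρ(λ) dλ < ∞. Let μ be the measure with density ρ with respect to Lebesgue measure, define W : ℝ → ℝ by W(λ) = ρ'(λ)/ρ(λ) if ρ(λ) > 0 and W(λ) = 0 otherwise, let D be the set of finite ℂ-linear combinations of the functions λ ↦ e^{isλ} (s ∈ ℝ), and for f ∈ D set (Yf)(λ) := i f'(λ) + (i/2) W(λ) f(λ), which defines an element of L²(ℝ, μ; ℂ). Then: (i) for all f, g ∈ D, ∫ conj(f(λ)) (Yg)(λ) ρ(λ) dλ = ∫ conj((Yf)(λ)) g(λ) ρ(λ) dλ; (ii) for every t ∈ ℝ and f ∈ D, the function λ ↦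 e^{−itλ} f(λ) belongs to D and Y(e^{−it·} f) = e^{−it·}·((Yf) + t f) as elements of L²(ℝ, μ; ℂ). -/
open MeasureTheory
open scoped ComplexConjugate

/-- `W = ρ'/ρ` on `{ρ > 0}` and `0` elsewhere. -/
noncomputable def logDeriv' (ρ : ℝ → ℝ) (x : ℝ) : ℝ :=
  if 0 < ρ x then deriv ρ x / ρ x else 0

/-- The operator `Y = i d/dλ + (i/2) W`. -/
noncomputable def Yop (ρ : ℝ → ℝ) (f : ℝ → ℂ) (x : ℝ) : ℂ :=
  Complex.I * deriv f x + (Complex.I / 2) * (logDeriv' ρ x : ℂ) * f x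

/-- The domain `D`: the ℂ-linear span of the exponentials `λ ↦ e^{isλ}`, `s ∈ ℝ`. -/
noncomputable def expSpan : Submodule ℂ (ℝ → ℂ) :=
  Submodule.span ℂ {f : ℝ → ℂ | ∃ s : ℝ, f = fun x : ℝ => Complex.exp (Complex.I * s * x)}


open Set Filter

section AuxiliaryLemmas

lemma hasDerivAt_cexp_lin (c : ℂ) (x : ℝ) :
    HasDerivAt (fun y : ℝ => Complex.exp (c * y)) (c * Complex.exp (c * x)) x := by
  have h1 : HasDerivAt (fun y : ℝ => c * (y : ℂ)) c x := by
    simpa using (Complex.ofRealCLM.hasDerivAt (x := x)).const_mul c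
  simpa [mul_comm] using h1.cexp

lemma norm_cexp_I_mul (s x : ℝ) : ‖Complex.exp (Complex.I * s * x)‖ = 1 := by
  simp [Complex.norm_exp, Complex.mul_re, Complex.mul_im]

lemma expSpan_nice {f : ℝ → ℂ} (hf : f ∈ expSpan) :
    Differentiable ℝ f ∧ Continuous (deriv f) ∧
      ∃ C : ℝ, 0 ≤ C ∧ ∀ x, ‖f x‖ ≤ C ∧ ‖deriv f x‖ ≤ C := by
  induction hf using Submodule.span_induction with
  | mem g hg =>
    obtain ⟨s, rfl⟩ := hg
    have hd : ∀ x : ℝ, HasDerivAt (fun y : ℝ => Complex.exp (Complex.I * s * y))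
        (Complex.I * s * Complex.exp (Complex.I * s * x)) x := fun x =>
      hasDerivAt_cexp_lin (Complex.I * s) x
    have hder : deriv (fun y : ℝ => Complex.exp (Complex.I * s * y))
        = fun x : ℝ => Complex.I * s * Complex.exp (Complex.I * s * x) :=
      funext fun x => (hd x).deriv
    refine ⟨fun x => (hd x).differentiableAt, ?_, max 1 |s|, le_max_of_le_left one_pos.le, ?_⟩
    · rw [hder]; fun_prop
    · intro x
      constructor
      · rw [norm_cexp_I_mul]; exact le_max_left _ _
      · rw [hder]
        simp only [norm_mul, Complex.norm_I, norm_cexp_I_mul, Complex.norm_real,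
          Real.norm_eq_abs, one_mul, mul_one]
        exact le_max_right _ _
  | zero =>
    have h0 : (0 : ℝ → ℂ) = fun _ : ℝ => (0 : ℂ) := rfl
    refine ⟨by rw [h0]; exact differentiable_const 0, ?_, 0, le_refl _, fun x => ?_⟩
    · rw [h0, deriv_const']; exact continuous_const
    · rw [h0, deriv_const']; simp
  | add g h hg hh ihg ihh =>
    obtain ⟨hg1, hg2, Cg, hCg, hgb⟩ := ihg
    obtain ⟨hh1, hh2, Ch, hCh, hhb⟩ := ihh
    have hder : deriv (g + h) = fun x => deriv g x + deriv h x :=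
      funext fun x => deriv_add (hg1 x) (hh1 x)
    refine ⟨hg1.add hh1, ?_, Cg + Ch, by positivity, fun x => ?_⟩
    · rw [hder]; exact hg2.add hh2
    · constructor
      · exact (norm_add_le _ _).trans (add_le_add (hgb x).1 (hhb x).1)
      · rw [hder]; exact (norm_add_le _ _).trans (add_le_add (hgb x).2 (hhb x).2)
  | smul c g hg ihg =>
    obtain ⟨hg1, hg2, Cg, hCg, hgb⟩ := ihg
    have hder : deriv (c • g) = fun x => c • deriv g x :=
      funext fun x => deriv_const_smul c (hg1 x)
    refine ⟨hg1.const_smul c, ?_, ‖c‖ * Cg, by positivity, fun x => ?_⟩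
    · rw [hder]; exact hg2.const_smul c
    · constructor
      · rw [Pi.smul_apply, norm_smul]
        exact mul_le_mul_of_nonneg_left (hgb x).1 (norm_nonneg c)
      · rw [hder, norm_smul]
        exact mul_le_mul_of_nonneg_left (hgb x).2 (norm_nonneg c)

lemma expSpan_conj {f : ℝ → ℂ} (hf : f ∈ expSpan) : (fun x => conj (f x)) ∈ expSpan := by
  induction hf using Submodule.span_induction with
  | mem g hg =>
    obtain ⟨s, rfl⟩ := hg
    refine Submodule.subset_span ⟨-s, funext fun x => ?_⟩
    rw [← Complex.exp_conj]
    congr 1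
    simp only [map_mul, Complex.conj_I, Complex.conj_ofReal, Complex.ofReal_neg]
    ring
  | zero =>
    have h0 : (fun x : ℝ => conj ((0 : ℝ → ℂ) x)) = (0 : ℝ → ℂ) := by funext x; simp
    rw [h0]; exact Submodule.zero_mem expSpan
  | add g h _ _ ihg ihh =>
    have h0 : (fun x : ℝ => conj ((g + h) x))
        = (fun x : ℝ => conj (g x)) + fun x : ℝ => conj (h x) := by funext x; simp
    rw [h0]; exact Submodule.add_mem expSpan ihg ihh
  | smul c g _ ihg =>
    have : (fun x => conj ((c • g) x)) = conj c • fun x => conj (g x) := by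
      funext x; simp [mul_comm]
    rw [this]; exact Submodule.smul_mem _ _ ihg

lemma expSpan_mul_exp (t : ℝ) {f : ℝ → ℂ} (hf : f ∈ expSpan) :
    (fun x : ℝ => Complex.exp (-Complex.I * t * x) * f x) ∈ expSpan := by
  induction hf using Submodule.span_induction with
  | mem g hg =>
    obtain ⟨s, rfl⟩ := hg
    refine Submodule.subset_span ⟨s - t, funext fun x => ?_⟩
    rw [← Complex.exp_add]
    congr 1
    push_cast
    ring
  | zero =>
    have h0 : (fun x : ℝ => Complex.exp (-Complex.I * t * x) * (0 : ℝ → ℂ) x) = (0 : ℝ → ℂ) := by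
      funext x; simp
    rw [h0]; exact Submodule.zero_mem expSpan
  | add g h _ _ ihg ihh =>
    have h0 : (fun x : ℝ => Complex.exp (-Complex.I * t * x) * (g + h) x)
        = (fun x : ℝ => Complex.exp (-Complex.I * t * x) * g x)
          + fun x : ℝ => Complex.exp (-Complex.I * t * x) * h x := by
      funext x; simp [mul_add]
    rw [h0]; exact Submodule.add_mem expSpan ihg ihh
  | smul c g _ ihg =>
    have : (fun x : ℝ => Complex.exp (-Complex.I * t * x) * (c • g) x)
        = c • fun x : ℝ => Complex.exp (-Complex.I * t * x) * g x := by
      funext x; simp; ring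
    rw [this]; exact Submodule.smul_mem _ _ ihg


section
variable {ρ : ℝ → ℝ}

lemma deriv_rho_eq_zero (hpos : ∀ x, 0 ≤ ρ x) {x : ℝ} (hx : ρ x = 0) :
    deriv ρ x = 0 :=
  IsLocalMin.deriv_eq_zero (Filter.Eventually.of_forall fun y => by rw [hx]; exact hpos y)

lemma W_mul_rho (hpos : ∀ x, 0 ≤ ρ x) (x : ℝ) :
    logDeriv' ρ x * ρ x = deriv ρ x := by
  unfold logDeriv'
  split_ifs with h
  · field_simp
  · have hx : ρ x = 0 := le_antisymm (not_lt.1 h) (hpos x)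
    rw [deriv_rho_eq_zero hpos hx, zero_mul]

lemma W_mul_rho' (hpos : ∀ x, 0 ≤ ρ x) (x : ℝ) :
    (logDeriv' ρ x : ℂ) * (ρ x : ℂ) = ((deriv ρ x : ℝ) : ℂ) := by
  rw [← Complex.ofReal_mul, W_mul_rho hpos]

lemma measurable_W (hdiff : Differentiable ℝ ρ) : Measurable (logDeriv' ρ) := by
  have hs : MeasurableSet {x : ℝ | 0 < ρ x} :=
    (isOpen_lt continuous_const hdiff.continuous).measurableSet
  exact Measurable.ite hs ((measurable_deriv ρ).div hdiff.continuous.measurable)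
    measurable_const

lemma measurable_Yop (hdiff : Differentiable ℝ ρ) {f : ℝ → ℂ}
    (hfc : Continuous f) (hfd : Continuous (deriv f)) : Measurable (Yop ρ f) := by
  unfold Yop
  exact ((continuous_const.mul hfd).measurable).add
    ((measurable_const.mul ((Complex.measurable_ofReal).comp (measurable_W hdiff))).mul
      hfc.measurable)

lemma Yop_mul_rho (hpos : ∀ x, 0 ≤ ρ x) (g : ℝ → ℂ) (x : ℝ) :
    Yop ρ g x * (ρ x : ℂ)
      = Complex.I * deriv g x * (ρ x : ℂ) + Complex.I / 2 * g x * ((deriv ρ x : ℝ) : ℂ) := by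
  simp only [Yop]
  linear_combination (Complex.I / 2 * g x) * W_mul_rho' hpos x

/-- the weak Weyl pointwise identity -/
lemma weyl_pointwise (ρ : ℝ → ℝ) (t : ℝ) {f : ℝ → ℂ} (hfd : Differentiable ℝ f) (x : ℝ) :
    Yop ρ (fun y : ℝ => Complex.exp (-Complex.I * t * y) * f y) x
      = Complex.exp (-Complex.I * t * x) * (Yop ρ f x + (t : ℂ) * f x) := by
  have he : HasDerivAt (fun y : ℝ => Complex.exp (-Complex.I * t * y))
      (-Complex.I * t * Complex.exp (-Complex.I * t * x)) x := by
    have h1 : HasDerivAt (fun y : ℝ => (-Complex.I * t) * (y : ℂ)) (-Complex.I * t) x := by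
      simpa using (Complex.ofRealCLM.hasDerivAt (x := x)).const_mul (-Complex.I * t)
    simpa [mul_comm] using h1.cexp
  have hprod := he.mul (hfd x).hasDerivAt
  rw [Yop, Yop, show (fun y : ℝ => Complex.exp (-Complex.I * t * y) * f y)
      = (fun y : ℝ => Complex.exp (-Complex.I * t * y)) * f from rfl, hprod.deriv]
  linear_combination (-(t : ℂ) * Complex.exp (-Complex.I * t * x) * f x) * Complex.I_mul_I


lemma integrable_deriv_rho {ρ : ℝ → ℝ} (hdiff : Differentiable ℝ ρ) (hpos : ∀ x, 0 ≤ ρ x)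
    (hint : Integrable ρ)
    (hfisher : IntegrableOn (fun x => (deriv ρ x) ^ 2 / ρ x) {x | 0 < ρ x}) :
    Integrable (deriv ρ) := by
  have hs : MeasurableSet {x : ℝ | 0 < ρ x} :=
    (isOpen_lt continuous_const hdiff.continuous).measurableSet
  have hind : Integrable ({x : ℝ | 0 < ρ x}.indicator fun x => (deriv ρ x) ^ 2 / ρ x) :=
    (integrable_indicator_iff hs).2 hfisher
  refine Integrable.mono' ((hind.add hint).div_const 2)
    (measurable_deriv ρ).aestronglyMeasurable (Filter.Eventually.of_forall fun x => ?_)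
  simp only [Pi.add_apply, Pi.div_apply]
  by_cases h : 0 < ρ x
  · rw [Set.indicator_of_mem (show x ∈ {x : ℝ | 0 < ρ x} from h)]
    rw [Real.norm_eq_abs]
    rw [le_div_iff₀ (by norm_num : (0:ℝ) < 2)]
    have key : (deriv ρ x) ^ 2 / ρ x * ρ x = (deriv ρ x) ^ 2 := by field_simp
    nlinarith [sq_nonneg (|deriv ρ x| - ρ x), sq_abs (deriv ρ x), abs_nonneg (deriv ρ x),
      mul_pos h h]
  · have hx : ρ x = 0 := le_antisymm (not_lt.1 h) (hpos x)
    rw [Set.indicator_of_notMem (show x ∉ {x : ℝ | 0 < ρ x} from h), deriv_rho_eq_zero hpos hx]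
    simp [hx]


lemma memLp_Yop (hdiff : Differentiable ℝ ρ) (hpos : ∀ x, 0 ≤ ρ x)
    (hint : Integrable ρ)
    (hfisher : IntegrableOn (fun x => (deriv ρ x) ^ 2 / ρ x) {x | 0 < ρ x})
    {f : ℝ → ℂ} (hfd : Differentiable ℝ f) (hfdc : Continuous (deriv f))
    {C : ℝ} (hC0 : 0 ≤ C) (hCb : ∀ x, ‖f x‖ ≤ C ∧ ‖deriv f x‖ ≤ C) :
    MemLp (Yop ρ f) 2 (MeasureTheory.volume.withDensity fun x => ENNReal.ofReal (ρ x)) := by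
  have hmeas := measurable_Yop hdiff hfd.continuous hfdc
  rw [memLp_two_iff_integrable_sq_norm hmeas.aestronglyMeasurable]
  have hwm : Measurable fun x : ℝ => ENNReal.ofReal (ρ x) :=
    ENNReal.measurable_ofReal.comp hdiff.continuous.measurable
  rw [integrable_withDensity_iff hwm
    (Filter.Eventually.of_forall fun x => ENNReal.ofReal_lt_top)]
  have hre : (fun x => ‖Yop ρ f x‖ ^ 2 * (ENNReal.ofReal (ρ x)).toReal)
      = fun x => ‖Yop ρ f x‖ ^ 2 * ρ x := by
    funext x; rw [ENNReal.toReal_ofReal (hpos x)]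
  rw [hre]
  have hs : MeasurableSet {x : ℝ | 0 < ρ x} :=
    (isOpen_lt continuous_const hdiff.continuous).measurableSet
  have hbint : Integrable (fun x => 2 * C ^ 2 * ρ x
      + C ^ 2 / 2 * ({x : ℝ | 0 < ρ x}.indicator (fun x => (deriv ρ x) ^ 2 / ρ x) x)) :=
    (hint.const_mul _).add (((integrable_indicator_iff hs).2 hfisher).const_mul _)
  refine Integrable.mono' hbint
    ((hmeas.norm.pow_const 2).mul hdiff.continuous.measurable).aestronglyMeasurable
    (Filter.Eventually.of_forall fun x => ?_)
  rw [Real.norm_eq_abs, abs_of_nonneg (mul_nonneg (pow_nonneg (norm_nonneg _) 2) (hpos x))]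
  by_cases h : 0 < ρ x
  · rw [Set.indicator_of_mem (show x ∈ {x : ℝ | 0 < ρ x} from h)]
    have hW2 : (logDeriv' ρ x) ^ 2 * ρ x = (deriv ρ x) ^ 2 / ρ x := by
      unfold logDeriv'; rw [if_pos h]; field_simp
    rw [← hW2, ← sq_abs (logDeriv' ρ x)]
    have hYb : ‖Yop ρ f x‖ ≤ C + C / 2 * |logDeriv' ρ x| := by
      have h1 : ‖Complex.I * deriv f x‖ ≤ C := by
        rw [norm_mul, Complex.norm_I, one_mul]; exact (hCb x).2
      have h2 : ‖Complex.I / 2 * (logDeriv' ρ x : ℂ) * f x‖ ≤ C / 2 * |logDeriv' ρ x| := by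
        rw [norm_mul, norm_mul, norm_div, Complex.norm_I, Complex.norm_real, Real.norm_eq_abs]
        have h2' : ‖(2 : ℂ)‖ = 2 := by norm_num
        rw [h2']
        calc 1 / 2 * |logDeriv' ρ x| * ‖f x‖ ≤ 1 / 2 * |logDeriv' ρ x| * C := by
              gcongr; exact (hCb x).1
          _ = C / 2 * |logDeriv' ρ x| := by ring
      exact (norm_add_le _ _).trans (add_le_add h1 h2)
    have hsq : ‖Yop ρ f x‖ ^ 2 ≤ (C + C / 2 * |logDeriv' ρ x|) ^ 2 :=
      pow_le_pow_left₀ (norm_nonneg _) hYb 2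
    nlinarith [mul_le_mul_of_nonneg_right hsq (hpos x),
      mul_nonneg (mul_nonneg (sq_nonneg C) (hpos x)) (sq_nonneg (|logDeriv' ρ x| - 2)),
      sq_abs (logDeriv' ρ x), abs_nonneg (logDeriv' ρ x), hpos x]
  · have hx : ρ x = 0 := le_antisymm (not_lt.1 h) (hpos x)
    rw [Set.indicator_of_notMem (show x ∉ {x : ℝ | 0 < ρ x} from h), hx]
    simp


/-- An integrable bound for `u · (Yop g) · ρ` when `u, g, g'` are bounded. -/
lemma integrable_comb (hdiff : Differentiable ℝ ρ) (hpos : ∀ x, 0 ≤ ρ x)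
    (hint : Integrable ρ) (hdint : Integrable (deriv ρ))
    {u g : ℝ → ℂ} (humeas : Measurable u) {Cu Cg : ℝ}
    (hCu0 : 0 ≤ Cu) (hCu : ∀ x, ‖u x‖ ≤ Cu)
    (hgd : Differentiable ℝ g) (hgdc : Continuous (deriv g))
    (hCgb : ∀ x, ‖g x‖ ≤ Cg ∧ ‖deriv g x‖ ≤ Cg) :
    Integrable (fun x => u x * Yop ρ g x * (ρ x : ℂ)) := by
  have hCg0 : 0 ≤ Cg := (norm_nonneg (g 0)).trans (hCgb 0).1
  have hb : Integrable (fun x => Cu * Cg * ρ x + Cu * Cg / 2 * |deriv ρ x|) :=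
    (hint.const_mul _).add (hdint.abs.const_mul _)
  refine Integrable.mono' hb ?_ (Filter.Eventually.of_forall fun x => ?_)
  · refine Measurable.aestronglyMeasurable ?_
    have hmW : Measurable (logDeriv' ρ) := measurable_W hdiff
    have : Measurable (Yop ρ g) := by
      unfold Yop
      exact ((continuous_const.mul hgdc).measurable).add
        ((measurable_const.mul (Complex.measurable_ofReal.comp hmW)).mul
          hgd.continuous.measurable)
    exact (humeas.mul this).mul
      (Complex.measurable_ofReal.comp hdiff.continuous.measurable)
  · rw [mul_assoc, norm_mul]
    calc ‖u x‖ * ‖Yop ρ g x * (ρ x : ℂ)‖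
        ≤ Cu * (Cg * ρ x + Cg / 2 * |deriv ρ x|) := by
          apply mul_le_mul (hCu x) ?_ (norm_nonneg _) hCu0
          rw [Yop_mul_rho hpos]
          refine (norm_add_le _ _).trans (add_le_add ?_ ?_)
          · rw [norm_mul, norm_mul, Complex.norm_I, one_mul, Complex.norm_real,
              Real.norm_eq_abs, abs_of_nonneg (hpos x)]
            exact mul_le_mul_of_nonneg_right (hCgb x).2 (hpos x)
          · rw [norm_mul, norm_mul, norm_div, Complex.norm_I, Complex.norm_real,
              Real.norm_eq_abs]
            have h2' : ‖(2 : ℂ)‖ = 2 := by norm_num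
            rw [h2']
            calc 1 / 2 * ‖g x‖ * |deriv ρ x| ≤ 1 / 2 * Cg * |deriv ρ x| := by
                  gcongr; exact (hCgb x).1
              _ = Cg / 2 * |deriv ρ x| := by ring
      _ = Cu * Cg * ρ x + Cu * Cg / 2 * |deriv ρ x| := by ring

lemma symm_part (hdiff : Differentiable ℝ ρ) (hpos : ∀ x, 0 ≤ ρ x)
    (hint : Integrable ρ)
    (hlim_top : Filter.Tendsto ρ Filter.atTop (nhds 0))
    (hlim_bot : Filter.Tendsto ρ Filter.atBot (nhds 0))
    (hfisher : IntegrableOn (fun x => (deriv ρ x) ^ 2 / ρ x) {x | 0 < ρ x})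
    {f g : ℝ → ℂ}
    (hfd : Differentiable ℝ f) (hfdc : Continuous (deriv f))
    {Cf : ℝ} (hCfb : ∀ x, ‖f x‖ ≤ Cf ∧ ‖deriv f x‖ ≤ Cf)
    (hgd : Differentiable ℝ g) (hgdc : Continuous (deriv g))
    {Cg : ℝ} (hCgb : ∀ x, ‖g x‖ ≤ Cg ∧ ‖deriv g x‖ ≤ Cg) :
    ∫ x : ℝ, conj (f x) * Yop ρ g x * (ρ x : ℂ)
      = ∫ x : ℝ, conj (Yop ρ f x) * g x * (ρ x : ℂ) := by
  have hCf0 : 0 ≤ Cf := (norm_nonneg (f 0)).trans (hCfb 0).1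
  have hCg0 : 0 ≤ Cg := (norm_nonneg (g 0)).trans (hCgb 0).1
  have hdint := integrable_deriv_rho hdiff hpos hint hfisher
  -- the function H and its derivative D
  set H : ℝ → ℂ := fun x => conj (f x) * g x * ((ρ x : ℝ) : ℂ) with hH
  set D : ℝ → ℂ := fun x =>
      (conj (deriv f x) * g x + conj (f x) * deriv g x) * ((ρ x : ℝ) : ℂ)
        + conj (f x) * g x * ((deriv ρ x : ℝ) : ℂ) with hD
  have hHd : ∀ x, HasDerivAt H (D x) x := by
    intro x
    have h1 : HasDerivAt (fun y => conj (f y)) (conj (deriv f x)) x :=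
      ((hfd x).hasDerivAt).star
    have h3 : HasDerivAt (fun y : ℝ => ((ρ y : ℝ) : ℂ)) ((deriv ρ x : ℝ) : ℂ) x :=
      ((hdiff x).hasDerivAt).ofReal_comp
    exact (h1.mul (hgd x).hasDerivAt).mul h3
  -- integrability of D
  have hDcont1 : Continuous fun x => (conj (deriv f x) * g x + conj (f x) * deriv g x) := by
    exact ((continuous_star.comp hfdc).mul hgd.continuous).add
      ((continuous_star.comp hfd.continuous).mul hgdc)
  have hDmeas : AEStronglyMeasurable D volume := by
    refine Measurable.aestronglyMeasurable ?_
    exact ((hDcont1.mul (Complex.continuous_ofReal.comp hdiff.continuous)).measurable).add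
      (((continuous_star.comp hfd.continuous).mul hgd.continuous).measurable.mul
        (Complex.measurable_ofReal.comp (measurable_deriv ρ)))
  have hDint : Integrable D := by
    have hb : Integrable (fun x => 2 * Cf * Cg * ρ x + Cf * Cg * |deriv ρ x|) :=
      (hint.const_mul _).add (hdint.abs.const_mul _)
    refine Integrable.mono' hb hDmeas (Filter.Eventually.of_forall fun x => ?_)
    have e1 : ‖(conj (deriv f x) * g x + conj (f x) * deriv g x) * ((ρ x : ℝ) : ℂ)‖
        ≤ 2 * Cf * Cg * ρ x := by
      rw [norm_mul, Complex.norm_real, Real.norm_eq_abs, abs_of_nonneg (hpos x)]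
      refine mul_le_mul_of_nonneg_right ((norm_add_le _ _).trans ?_) (hpos x)
      have i1 : ‖conj (deriv f x) * g x‖ ≤ Cf * Cg := by
        rw [norm_mul, RCLike.norm_conj]
        exact mul_le_mul (hCfb x).2 (hCgb x).1 (norm_nonneg _) hCf0
      have i2 : ‖conj (f x) * deriv g x‖ ≤ Cf * Cg := by
        rw [norm_mul, RCLike.norm_conj]
        exact mul_le_mul (hCfb x).1 (hCgb x).2 (norm_nonneg _) hCf0
      linarith
    have e2 : ‖conj (f x) * g x * ((deriv ρ x : ℝ) : ℂ)‖ ≤ Cf * Cg * |deriv ρ x| := by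
      rw [norm_mul, norm_mul, RCLike.norm_conj, Complex.norm_real, Real.norm_eq_abs]
      exact mul_le_mul_of_nonneg_right
        (mul_le_mul (hCfb x).1 (hCgb x).1 (norm_nonneg _) hCf0) (abs_nonneg _)
    exact (norm_add_le _ _).trans (by linarith)
  -- limits of H at ±∞
  have hHb : ∀ x, ‖H x‖ ≤ Cf * Cg * ρ x := by
    intro x
    rw [hH]
    simp only
    rw [norm_mul, norm_mul, RCLike.norm_conj, Complex.norm_real, Real.norm_eq_abs,
      abs_of_nonneg (hpos x)]
    exact mul_le_mul_of_nonneg_right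
      (mul_le_mul (hCfb x).1 (hCgb x).1 (norm_nonneg _) hCf0) (hpos x)
  have htop : Tendsto H atTop (nhds 0) := by
    rw [tendsto_zero_iff_norm_tendsto_zero]
    refine tendsto_of_tendsto_of_tendsto_of_le_of_le tendsto_const_nhds ?_
      (fun x => norm_nonneg _) hHb
    simpa using hlim_top.const_mul (Cf * Cg)
  have hbot : Tendsto H atBot (nhds 0) := by
    rw [tendsto_zero_iff_norm_tendsto_zero]
    refine tendsto_of_tendsto_of_tendsto_of_le_of_le tendsto_const_nhds ?_
      (fun x => norm_nonneg _) hHb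
    simpa using hlim_bot.const_mul (Cf * Cg)
  -- FTC on the real line
  have hIoi : ∫ x in Ioi (0 : ℝ), D x = 0 - H 0 :=
    integral_Ioi_of_hasDerivAt_of_tendsto' (fun x _ => hHd x) hDint.integrableOn htop
  have hIic : ∫ x in Iic (0 : ℝ), D x = H 0 - 0 :=
    integral_Iic_of_hasDerivAt_of_tendsto' (fun x _ => hHd x) hDint.integrableOn hbot
  have hDzero : ∫ x : ℝ, D x = 0 := by
    rw [← intervalIntegral.integral_Iic_add_Ioi (b := (0 : ℝ)) hDint.integrableOn hDint.integrableOn,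
      hIoi, hIic]
    ring
  -- the pointwise algebraic identity
  have key : ∀ x, conj (f x) * Yop ρ g x * ((ρ x : ℝ) : ℂ)
      - conj (Yop ρ f x) * g x * ((ρ x : ℝ) : ℂ) = Complex.I * D x := by
    intro x
    simp only [hD, Yop, map_add, map_mul, map_div₀, Complex.conj_I, Complex.conj_ofReal,
      map_ofNat]
    linear_combination (Complex.I * conj (f x) * g x) * W_mul_rho' hpos x
  -- integrability of both integrands
  have h1 : Integrable (fun x => conj (f x) * Yop ρ g x * ((ρ x : ℝ) : ℂ)) :=
    integrable_comb hdiff hpos hint hdint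
      (continuous_star.comp hfd.continuous).measurable hCf0
      (fun x => by rw [RCLike.norm_conj]; exact (hCfb x).1) hgd hgdc hCgb
  have h2 : Integrable (fun x => conj (Yop ρ f x) * g x * ((ρ x : ℝ) : ℂ)) := by
    have h2' : Integrable (fun x => conj (g x) * Yop ρ f x * ((ρ x : ℝ) : ℂ)) :=
      integrable_comb hdiff hpos hint hdint
        (continuous_star.comp hgd.continuous).measurable hCg0
        (fun x => by rw [RCLike.norm_conj]; exact (hCgb x).1) hfd hfdc hCfb
    have hmY : Measurable (Yop ρ f) := by
      unfold Yop
      exact ((continuous_const.mul hfdc).measurable).add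
        ((measurable_const.mul (Complex.measurable_ofReal.comp (measurable_W hdiff))).mul
          hfd.continuous.measurable)
    refine Integrable.mono' h2'.norm ?_ (Filter.Eventually.of_forall fun x => ?_)
    · exact Measurable.aestronglyMeasurable
        (((continuous_star.measurable.comp hmY).mul hgd.continuous.measurable).mul
          (Complex.measurable_ofReal.comp hdiff.continuous.measurable))
    · simp only [norm_mul, RCLike.norm_conj]
      exact le_of_eq (by ring)
  -- conclude
  have hsub := integral_sub h1 h2
  rw [← sub_eq_zero, ← hsub]
  calc ∫ x : ℝ, (conj (f x) * Yop ρ g x * ((ρ x : ℝ) : ℂ)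
        - conj (Yop ρ f x) * g x * ((ρ x : ℝ) : ℂ))
      = ∫ x : ℝ, Complex.I * D x := by
        congr 1; funext x; exact key x
    _ = Complex.I * ∫ x : ℝ, D x := integral_const_mul _ _
    _ = 0 := by rw [hDzero, mul_zero]


end

end AuxiliaryLemmas

/-- for a nonnegative integrable differentiable density `ρ` vanishing at
`±∞` with finite Fisher-type integral `∫_{ρ>0} ρ'²/ρ`, the operator
`Y = i d/dλ + (i/2) ρ'/ρ`, defined on the span `D` of the exponentials `λ ↦ e^{isλ}`,
maps `D` into `L²(ℝ, ρ dλ; ℂ)`, is symmetric there, and satisfies the weak Weyl relation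
`Y(e^{-it·} f) = e^{-it·}((Yf) + tf)` (as elements of `L²(ℝ, ρ dλ)`) with respect to the
unitary group of multiplication by `e^{-itλ}`; i.e. `Y` is a strong time operator of the
multiplication operator `M_X`. -/
theorem strong_time_operator_of_multiplication
    (ρ : ℝ → ℝ) (hdiff : Differentiable ℝ ρ) (hpos : ∀ x, 0 ≤ ρ x)
    (hint : Integrable ρ)
    (hlim_top : Filter.Tendsto ρ Filter.atTop (nhds 0))
    (hlim_bot : Filter.Tendsto ρ Filter.atBot (nhds 0))
    (hfisher : IntegrableOn (fun x => (deriv ρ x) ^ 2 / ρ x) {x | 0 < ρ x}) :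
    -- Yf defines an element of L²(ℝ, μ; ℂ), μ = ρ dλ
    (∀ f ∈ expSpan,
      MemLp (Yop ρ f) 2 (MeasureTheory.volume.withDensity fun x => ENNReal.ofReal (ρ x))) ∧
    -- (i) symmetry of Y on D
    (∀ f ∈ expSpan, ∀ g ∈ expSpan,
      ∫ x : ℝ, conj (f x) * Yop ρ g x * (ρ x : ℂ)
        = ∫ x : ℝ, conj (Yop ρ f x) * g x * (ρ x : ℂ)) ∧
    -- (ii) the weak Weyl relation
    (∀ (t : ℝ), ∀ f ∈ expSpan,
      ((fun x : ℝ => Complex.exp (-Complex.I * t * x) * f x) ∈ expSpan) ∧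
      (∀ᵐ x ∂(MeasureTheory.volume.withDensity fun x => ENNReal.ofReal (ρ x)),
        Yop ρ (fun y : ℝ => Complex.exp (-Complex.I * t * y) * f y) x
          = Complex.exp (-Complex.I * t * x) * (Yop ρ f x + (t : ℂ) * f x))) := by
  refine ⟨?_, ?_, ?_⟩
  · intro f hf
    obtain ⟨hfd, hfdc, C, hC0, hCb⟩ := expSpan_nice hf
    exact memLp_Yop hdiff hpos hint hfisher hfd hfdc hC0 hCb
  · intro f hf g hg
    obtain ⟨hfd, hfdc, Cf, _, hCfb⟩ := expSpan_nice hf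
    obtain ⟨hgd, hgdc, Cg, _, hCgb⟩ := expSpan_nice hg
    exact symm_part hdiff hpos hint hlim_top hlim_bot hfisher hfd hfdc hCfb hgd hgdc hCgb
  · intro t f hf
    obtain ⟨hfd, -, -, -, -⟩ := expSpan_nice hf
    exact ⟨expSpan_mul_exp t hf,
      Filter.Eventually.of_forall fun x => weyl_pointwise ρ t hfd x⟩
end
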